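/- arXiv:1106.5812 — 8 statements merged into one kernel-verified Lean document; each statement's English description precedes it below -/
import Mathlib

section
/- Stability of constrained Tikhonov regularization with respect to the data: let x_α be the minimizer over C of x ↦ ‖Tx − g_δ‖² + α‖x − x₀‖² and let x̄_α be the minimizer over C of x ↦ ‖Tx − ḡ_δ‖² + α‖x − x₀‖². Then ‖x_α − x̄_α‖ ≤ ‖g_δ − ḡ_δ‖ / √α. -/
open scoped RealInnerProductSpace

private lemma tikh_par {Y : Type*} [NormedAddCommGroup Y] [InnerProductSpace ℝ Y]
    (a b : Y) : ‖(1/2 : ℝ) • (a + b)‖ ^ 2 = (2 * ‖a‖ ^ 2 + 2 * ‖b‖ ^ 2 - ‖a - b‖ ^ 2) / 4 := by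
  have hpar := parallelogram_law_with_norm ℝ a b
  have : ‖(1/2 : ℝ) • (a + b)‖ = (1/2) * ‖a + b‖ := by
    rw [norm_smul]; simp
  rw [this]
  nlinarith [norm_nonneg (a + b), norm_nonneg (a - b)]

private lemma tikh_cross {Y : Type*} [NormedAddCommGroup Y] [InnerProductSpace ℝ Y]
    (a b g g' : Y) :
    ‖a - g‖ ^ 2 - ‖a - g'‖ ^ 2 - ‖b - g‖ ^ 2 + ‖b - g'‖ ^ 2 = -2 * ⟪a - b, g - g'⟫ := by
  rw [norm_sub_sq_real, norm_sub_sq_real, norm_sub_sq_real, norm_sub_sq_real,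
    inner_sub_left, inner_sub_right, inner_sub_right]
  ring

/-- **Stability of constrained Tikhonov regularization with respect to the data.**
If `x_α` minimizes `x ↦ ‖Tx − g_δ‖² + α‖x − x₀‖²` over the nonempty closed convex set `C`
and `x̄_α` minimizes `x ↦ ‖Tx − ḡ_δ‖² + α‖x − x₀‖²` over `C`, then
`‖x_α − x̄_α‖ ≤ ‖g_δ − ḡ_δ‖ / √α`. -/
theorem constrained_tikhonov_data_stability
    {X Y : Type*} [NormedAddCommGroup X] [InnerProductSpace ℝ X] [CompleteSpace X]
    [NormedAddCommGroup Y] [InnerProductSpace ℝ Y] [CompleteSpace Y]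
    (C : Set X) (hC : C.Nonempty) (hCclosed : IsClosed C) (hCconvex : Convex ℝ C)
    (T : X →L[ℝ] Y) (gδ gδ' : Y) (x₀ : X) (α : ℝ) (hα : 0 < α)
    (xα xα' : X) (hxαC : xα ∈ C) (hxα'C : xα' ∈ C)
    (hxα : IsMinOn (fun x => ‖T x - gδ‖ ^ 2 + α * ‖x - x₀‖ ^ 2) C xα)
    (hxα' : IsMinOn (fun x => ‖T x - gδ'‖ ^ 2 + α * ‖x - x₀‖ ^ 2) C xα') :
    ‖xα - xα'‖ ≤ ‖gδ - gδ'‖ / Real.sqrt α := by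
  set m : X := (1/2 : ℝ) • (xα + xα') with hm_def
  have hmC : m ∈ C := by
    have := hCconvex hxαC hxα'C (by norm_num : (0:ℝ) ≤ 1/2) (by norm_num : (0:ℝ) ≤ 1/2)
      (by norm_num)
    simpa [hm_def, smul_add] using this
  have h1 : ‖T xα - gδ‖ ^ 2 + α * ‖xα - x₀‖ ^ 2
      ≤ ‖T m - gδ‖ ^ 2 + α * ‖m - x₀‖ ^ 2 := hxα hmC
  have h2 : ‖T xα' - gδ'‖ ^ 2 + α * ‖xα' - x₀‖ ^ 2
      ≤ ‖T m - gδ'‖ ^ 2 + α * ‖m - x₀‖ ^ 2 := hxα' hmC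
  -- rewrite the midpoint terms
  have hTm : ∀ g : Y, T m - g = (1/2 : ℝ) • ((T xα - g) + (T xα' - g)) := by
    intro g
    simp only [hm_def, map_smul, map_add, smul_add, smul_sub]
    module
  have hmx : m - x₀ = (1/2 : ℝ) • ((xα - x₀) + (xα' - x₀)) := by
    simp only [hm_def]; module
  have hd : (T xα - gδ) - (T xα' - gδ) = T xα - T xα' := by abel
  have hd' : (T xα - gδ') - (T xα' - gδ') = T xα - T xα' := by abel
  have hdx : (xα - x₀) - (xα' - x₀) = xα - xα' := by abel
  have e1 : ‖T m - gδ‖ ^ 2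
      = (2 * ‖T xα - gδ‖ ^ 2 + 2 * ‖T xα' - gδ‖ ^ 2 - ‖T xα - T xα'‖ ^ 2) / 4 := by
    rw [hTm, tikh_par, hd]
  have e2 : ‖T m - gδ'‖ ^ 2
      = (2 * ‖T xα - gδ'‖ ^ 2 + 2 * ‖T xα' - gδ'‖ ^ 2 - ‖T xα - T xα'‖ ^ 2) / 4 := by
    rw [hTm, tikh_par, hd']
  have e3 : ‖m - x₀‖ ^ 2
      = (2 * ‖xα - x₀‖ ^ 2 + 2 * ‖xα' - x₀‖ ^ 2 - ‖xα - xα'‖ ^ 2) / 4 := by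
    rw [hmx, tikh_par, hdx]
  have hcross := tikh_cross (T xα) (T xα') gδ gδ'
  have hinner : ⟪T xα - T xα', gδ - gδ'⟫ ≤ ‖T xα - T xα'‖ * ‖gδ - gδ'‖ :=
    real_inner_le_norm _ _
  -- combine: α‖d‖² + ‖Td‖² ≤ 2⟪Td, Δg⟫ ≤ 2‖Td‖‖Δg‖, hence α‖d‖² ≤ ‖Δg‖²
  have key : α * ‖xα - xα'‖ ^ 2 ≤ ‖gδ - gδ'‖ ^ 2 := by
    nlinarith [sq_nonneg (‖T xα - T xα'‖ - ‖gδ - gδ'‖)]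
  have hs : (0:ℝ) < Real.sqrt α := Real.sqrt_pos.mpr hα
  rw [le_div_iff₀ hs]
  have hsq : Real.sqrt α ^ 2 = α := Real.sq_sqrt hα.le
  nlinarith [norm_nonneg (xα - xα'), norm_nonneg (gδ - gδ'), hs,
    mul_nonneg (norm_nonneg (xα - xα')) hs.le]
end

section
/- Residual bound for constrained Tikhonov regularization under a projected source condition: let x_α be the minimizer over C of x ↦ ‖Tx − g‖² + α‖x − x₀‖². Then ‖T x_α − g‖ ≤ α · ‖ω‖. -/
open RealInnerProductSpace

/-- If `0 ≤ t*A + t²*B` for all small positive `t` and `B ≥ 0`, then `A ≥ 0`. -/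
lemma aux_nonneg_of_forall (A B : ℝ) (hB : 0 ≤ B)
    (h : ∀ t : ℝ, 0 < t → t ≤ 1 → 0 ≤ t * A + t ^ 2 * B) : 0 ≤ A := by
  by_contra hA
  push_neg at hA
  set t := min 1 (-A / (B + 1)) with ht
  have hb1 : (0:ℝ) < B + 1 := by linarith
  have ht0 : 0 < t := lt_min one_pos (div_pos (by linarith) hb1)
  have ht1 : t ≤ 1 := min_le_left _ _
  have h2 : t ≤ -A / (B + 1) := min_le_right _ _
  have key := h t ht0 ht1
  have h3 : t * B ≤ (-A / (B + 1)) * B := mul_le_mul_of_nonneg_right h2 hB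
  have h4 : (-A / (B + 1)) * B < -A := by
    rw [div_mul_eq_mul_div, div_lt_iff₀ hb1]
    nlinarith
  have hAB : A + t * B < 0 := by linarith
  nlinarith [mul_pos ht0 (neg_pos.mpr hAB)]

/-- Expansion of `‖a - t • b‖²`. -/
lemma norm_sub_smul_sq {X : Type*} [NormedAddCommGroup X] [InnerProductSpace ℝ X]
    (a b : X) (t : ℝ) :
    ‖a - t • b‖ ^ 2 = ‖a‖ ^ 2 - 2 * t * ⟪a, b⟫ + t ^ 2 * ‖b‖ ^ 2 := by
  rw [norm_sub_sq_real, real_inner_smul_right, norm_smul]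
  simp [mul_pow, sq_abs]
  ring

/-- **Residual bound for constrained Tikhonov regularization under a projected
source condition.** Let `P` be the metric projection onto the nonempty closed convex
set `C`, let `x†_C` minimize `‖x − x₀‖` over `{x ∈ C : Tx = g}`, and assume the source
condition `x†_C = P (T*ω + x₀)`. If `x_α` minimizes `x ↦ ‖Tx − g‖² + α‖x − x₀‖²` over
`C`, then `‖T x_α − g‖ ≤ α · ‖ω‖`. -/
theorem constrained_tikhonov_residual_bound
    {X Y : Type*} [NormedAddCommGroup X] [InnerProductSpace ℝ X] [CompleteSpace X]
    [NormedAddCommGroup Y] [InnerProductSpace ℝ Y] [CompleteSpace Y]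
    (C : Set X) (hC : C.Nonempty) (hCclosed : IsClosed C) (hCconvex : Convex ℝ C)
    (P : X → X) (hPmem : ∀ z, P z ∈ C)
    (hPproj : ∀ z, ∀ w ∈ C, ‖z - P z‖ ≤ ‖z - w‖)
    (T : X →L[ℝ] Y) (g : Y) (x₀ : X) (hx₀C : x₀ ∈ C) (α : ℝ) (hα : 0 < α)
    (hgC : ∃ x ∈ C, T x = g)
    (xdag : X) (hxdagC : xdag ∈ C) (hxdagEq : T xdag = g)
    (hxdagMin : IsMinOn (fun x => ‖x - x₀‖) {x ∈ C | T x = g} xdag)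
    (ω : Y) (hsource : xdag = P (ContinuousLinearMap.adjoint T ω + x₀))
    (xα : X) (hxαC : xα ∈ C)
    (hxα : IsMinOn (fun x => ‖T x - g‖ ^ 2 + α * ‖x - x₀‖ ^ 2) C xα) :
    ‖T xα - g‖ ≤ α * ‖ω‖ := by
  set z := ContinuousLinearMap.adjoint T ω + x₀ with hz
  -- membership of convex combinations
  have hseg : ∀ (u v : X), u ∈ C → v ∈ C → ∀ t : ℝ, 0 < t → t ≤ 1 →
      u + t • (v - u) ∈ C := by
    intro u v hu hv t ht0 ht1
    have : (1 - t) • u + t • v ∈ C :=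
      hCconvex hu hv (by linarith) (le_of_lt ht0) (by ring)
    convert this using 1
    rw [smul_sub]; module
  -- Step 1: projection variational inequality: ⟪z - xdag, w - xdag⟫ ≤ 0 for w ∈ C
  have hproj : ∀ w ∈ C, ⟪z - xdag, w - xdag⟫ ≤ 0 := by
    intro w hw
    have h0 : 0 ≤ -(2 * ⟪z - xdag, w - xdag⟫) := by
      apply aux_nonneg_of_forall _ (‖w - xdag‖ ^ 2) (by positivity)
      intro t ht0 ht1
      have hmem := hseg xdag w hxdagC hw t ht0 ht1
      have hle : ‖z - xdag‖ ≤ ‖z - (xdag + t • (w - xdag))‖ := by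
        have := hPproj z _ hmem
        rwa [← hsource] at this
      have hsq : ‖z - xdag‖ ^ 2 ≤ ‖z - (xdag + t • (w - xdag))‖ ^ 2 := by
        apply sq_le_sq' <;> nlinarith [norm_nonneg (z - xdag)]
      have hexp : ‖z - (xdag + t • (w - xdag))‖ ^ 2
          = ‖z - xdag‖ ^ 2 - 2 * t * ⟪z - xdag, w - xdag⟫ + t ^ 2 * ‖w - xdag‖ ^ 2 := by
        rw [show z - (xdag + t • (w - xdag)) = (z - xdag) - t • (w - xdag) by abel,
          norm_sub_smul_sq]
      nlinarith
    linarith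
  -- Step 2: optimality variational inequality for xα
  have hopt : 0 ≤ ⟪T xα - g, T (xdag - xα)⟫ + α * ⟪xα - x₀, xdag - xα⟫ := by
    have h0 : 0 ≤ 2 * (⟪T xα - g, T (xdag - xα)⟫ + α * ⟪xα - x₀, xdag - xα⟫) := by
      apply aux_nonneg_of_forall _ (‖T (xdag - xα)‖ ^ 2 + α * ‖xdag - xα‖ ^ 2)
        (by positivity)
      intro t ht0 ht1
      have hmem := hseg xα xdag hxαC hxdagC t ht0 ht1
      have hle := hxα hmem
      simp only [Set.mem_setOf_eq] at hle
      have e1 : ‖T (xα + t • (xdag - xα)) - g‖ ^ 2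
          = ‖T xα - g‖ ^ 2 + 2 * t * ⟪T xα - g, T (xdag - xα)⟫
            + t ^ 2 * ‖T (xdag - xα)‖ ^ 2 := by
        have : T (xα + t • (xdag - xα)) - g = (T xα - g) - (-t) • T (xdag - xα) := by
          rw [map_add, map_smul]; simp; abel
        rw [this, norm_sub_smul_sq]; ring
      have e2 : ‖(xα + t • (xdag - xα)) - x₀‖ ^ 2
          = ‖xα - x₀‖ ^ 2 + 2 * t * ⟪xα - x₀, xdag - xα⟫ + t ^ 2 * ‖xdag - xα‖ ^ 2 := by
        have : (xα + t • (xdag - xα)) - x₀ = (xα - x₀) - (-t) • (xdag - xα) := by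
          simp; abel
        rw [this, norm_sub_smul_sq]; ring
      rw [e1, e2] at hle
      nlinarith
    linarith
  -- Step 3: combine
  set r := ‖T xα - g‖ with hr
  have hr0 : 0 ≤ r := norm_nonneg _
  have hTsub : T (xdag - xα) = g - T xα := by rw [map_sub, hxdagEq]
  have hfirst : ⟪T xα - g, T (xdag - xα)⟫ = -(r ^ 2) := by
    rw [hTsub, show g - T xα = -(T xα - g) by abel, inner_neg_right,
      real_inner_self_eq_norm_sq]
  have hVI := hproj xα hxαC
  -- ⟪z - xdag, xα - xdag⟫ ≤ 0, z = T*ω + x₀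
  have hadj : ⟪ContinuousLinearMap.adjoint T ω, xα - xdag⟫ = ⟪ω, T (xα - xdag)⟫ :=
    ContinuousLinearMap.adjoint_inner_left T (xα - xdag) ω
  have hsplit : ⟪z - xdag, xα - xdag⟫
      = ⟪ω, T (xα - xdag)⟫ + ⟪x₀ - xdag, xα - xdag⟫ := by
    rw [hz, show ContinuousLinearMap.adjoint T ω + x₀ - xdag
        = ContinuousLinearMap.adjoint T ω + (x₀ - xdag) by abel,
      inner_add_left, hadj]
  have hT2 : T (xα - xdag) = T xα - g := by rw [map_sub, hxdagEq]
  have hcs : ⟪ω, T (xα - xdag)⟫ ≥ -(‖ω‖ * r) := by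
    rw [hT2]
    have := abs_real_inner_le_norm ω (T xα - g)
    have h1 := neg_abs_le (⟪ω, T xα - g⟫)
    nlinarith [abs_nonneg (⟪ω, T xα - g⟫)]
  -- from hVI: ⟪x₀ - xdag, xα - xdag⟫ ≤ -⟪ω, T(xα - xdag)⟫ ≤ ‖ω‖ r
  have hkey : ⟪x₀ - xdag, xα - xdag⟫ ≤ ‖ω‖ * r := by
    have : ⟪ω, T (xα - xdag)⟫ + ⟪x₀ - xdag, xα - xdag⟫ ≤ 0 := by
      rw [← hsplit]; exact hVI
    linarith
  -- ⟪xα - x₀, xdag - xα⟫ = ⟪x₀ - xdag, xα - xdag⟫ - ‖xdag - xα‖²  ... check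
  have hdecomp : ⟪xα - x₀, xdag - xα⟫
      = ⟪x₀ - xdag, xα - xdag⟫ - ‖xdag - xα‖ ^ 2 := by
    rw [show xα - x₀ = (xdag - x₀) - (xdag - xα) by abel, inner_sub_left,
      real_inner_self_eq_norm_sq,
      show (⟪xdag - x₀, xdag - xα⟫ : ℝ) = ⟪x₀ - xdag, xα - xdag⟫ by
        rw [show xdag - x₀ = -(x₀ - xdag) by abel, show xdag - xα = -(xα - xdag) by abel,
          inner_neg_neg]]
  have hmain : r ^ 2 ≤ α * (‖ω‖ * r) := by
    rw [hfirst] at hopt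
    nlinarith [norm_nonneg (xdag - xα), mul_le_mul_of_nonneg_left hkey (le_of_lt hα),
      mul_nonneg (le_of_lt hα) (sq_nonneg ‖xdag - xα‖)]
  rcases eq_or_lt_of_le hr0 with h | h
  · rw [← h]; positivity
  · nlinarith
end

section
/- Stability of constrained Tikhonov regularization with respect to perturbations of the operator: for i ∈ {1,2} let x_i be the minimizer over C of x ↦ ‖T_i(x − x̃)‖² + α‖x − x₀‖². Then ‖x₁ − x₂‖ ≤ √(3/2) · ‖ω‖ · ‖T₁ − T₂‖, where ‖T₁ − T₂‖ is the operator norm; in particular the bound is independent of α. -/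
set_option maxHeartbeats 1000000
open RealInnerProductSpace

private lemma aux_limit (L M : ℝ) (h : ∀ t : ℝ, 0 < t → t ≤ 1 → 0 ≤ t * L + t ^ 2 * M) :
    0 ≤ L := by
  by_contra hL
  push_neg at hL
  rcases le_or_gt M 0 with hM | hM
  · have := h 1 one_pos le_rfl
    nlinarith
  · have hnL : 0 < -L := by linarith
    have ht0 : 0 < min 1 (-L / (2 * M)) := lt_min one_pos (div_pos hnL (by linarith))
    set t := min 1 (-L / (2 * M)) with ht
    have h1 := h t ht0 (min_le_left _ _)
    have h2 : t ≤ -L / (2 * M) := min_le_right _ _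
    have h3 : t * M ≤ -L / 2 := by
      have := mul_le_mul_of_nonneg_right h2 (le_of_lt hM)
      calc t * M ≤ -L / (2 * M) * M := this
        _ = -L / 2 := by field_simp
    nlinarith [mul_le_mul_of_nonneg_left h3 ht0.le, mul_pos ht0 hnL]

private lemma norm_add_smul_sq {E : Type*} [NormedAddCommGroup E] [InnerProductSpace ℝ E]
    (a b : E) (t : ℝ) : ‖a + t • b‖ ^ 2 = ‖a‖ ^ 2 + 2 * t * ⟪a, b⟫ + t ^ 2 * ‖b‖ ^ 2 := by
  rw [norm_add_sq_real, real_inner_smul_right, norm_smul]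
  simp [Real.norm_eq_abs, mul_pow, sq_abs]
  ring

private lemma proj_vi {X : Type*} [NormedAddCommGroup X] [InnerProductSpace ℝ X]
    (C : Set X) (hCconvex : Convex ℝ C)
    (P : X → X) (hPmem : ∀ z, P z ∈ C)
    (hPproj : ∀ z, ∀ w ∈ C, ‖z - P z‖ ≤ ‖z - w‖)
    (z x : X) (hx : x ∈ C) : ⟪z - P z, x - P z⟫ ≤ 0 := by
  set p := P z with hp
  have key : ∀ t : ℝ, 0 < t → t ≤ 1 →
      0 ≤ t * (-2 * ⟪z - p, x - p⟫) + t ^ 2 * ‖x - p‖ ^ 2 := by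
    intro t ht0 ht1
    have hmem : p + t • (x - p) ∈ C := hCconvex.add_smul_sub_mem (hPmem z) hx ⟨ht0.le, ht1⟩
    have hle := hPproj z _ hmem
    have hsq : ‖z - p‖ ^ 2 ≤ ‖z - (p + t • (x - p))‖ ^ 2 := by
      apply pow_le_pow_left₀ (norm_nonneg _) hle
    have hrw : z - (p + t • (x - p)) = (z - p) + (-t) • (x - p) := by
      rw [neg_smul]; abel
    rw [hrw, norm_add_smul_sq] at hsq
    nlinarith [hsq]
  have := aux_limit _ _ key
  linarith

private lemma tikhonov_vi {X Y : Type*} [NormedAddCommGroup X] [InnerProductSpace ℝ X]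
    [NormedAddCommGroup Y] [InnerProductSpace ℝ Y]
    (C : Set X) (hCconvex : Convex ℝ C) (T : X →L[ℝ] Y) (α : ℝ)
    (x₀ c xs : X) (hxs : xs ∈ C)
    (hmin : IsMinOn (fun x => ‖T (x - c)‖ ^ 2 + α * ‖x - x₀‖ ^ 2) C xs)
    (x : X) (hx : x ∈ C) :
    0 ≤ ⟪T (xs - c), T (x - xs)⟫ + α * ⟪xs - x₀, x - xs⟫ := by
  have key : ∀ t : ℝ, 0 < t → t ≤ 1 →
      0 ≤ t * (2 * (⟪T (xs - c), T (x - xs)⟫ + α * ⟪xs - x₀, x - xs⟫))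
        + t ^ 2 * (‖T (x - xs)‖ ^ 2 + α * ‖x - xs‖ ^ 2) := by
    intro t ht0 ht1
    have hmem : xs + t • (x - xs) ∈ C := hCconvex.add_smul_sub_mem hxs hx ⟨ht0.le, ht1⟩
    have hle := hmin hmem
    simp only [Set.mem_setOf_eq] at hle
    have e1 : xs + t • (x - xs) - c = (xs - c) + t • (x - xs) := by abel
    have e2 : xs + t • (x - xs) - x₀ = (xs - x₀) + t • (x - xs) := by abel
    have hle' : ‖T (xs - c)‖ ^ 2 + α * ‖xs - x₀‖ ^ 2 ≤
        ‖T ((xs - c) + t • (x - xs))‖ ^ 2 + α * ‖(xs - x₀) + t • (x - xs)‖ ^ 2 := by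
      rw [← e1, ← e2]; exact hle
    rw [map_add, ContinuousLinearMap.map_smul, norm_add_smul_sq, norm_add_smul_sq] at hle'
    nlinarith [hle']
  have := aux_limit _ _ key
  linarith

/-- **Stability of constrained Tikhonov regularization with respect to perturbations of
the operator.** For `i ∈ {1,2}`, let `x_i` minimize `x ↦ ‖T_i(x − x̃)‖² + α‖x − x₀‖²`
over the nonempty closed convex set `C`. Assume the source condition `x̃ = P (T₂*ω + x₀)`
(where `P` is the metric projection onto `C`) and that `x̃` minimizes `‖x − x₀‖` over
`{x ∈ C : T₂x = T₂x̃}`. Then `‖x₁ − x₂‖ ≤ √(3/2) · ‖ω‖ · ‖T₁ − T₂‖`, a bound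
independent of `α`. -/
theorem constrained_tikhonov_operator_stability
    {X Y : Type*} [NormedAddCommGroup X] [InnerProductSpace ℝ X] [CompleteSpace X]
    [NormedAddCommGroup Y] [InnerProductSpace ℝ Y] [CompleteSpace Y]
    (C : Set X) (hC : C.Nonempty) (hCclosed : IsClosed C) (hCconvex : Convex ℝ C)
    (P : X → X) (hPmem : ∀ z, P z ∈ C)
    (hPproj : ∀ z, ∀ w ∈ C, ‖z - P z‖ ≤ ‖z - w‖)
    (T₁ T₂ : X →L[ℝ] Y) (α : ℝ) (hα : 0 < α)
    (x₀ : X) (hx₀C : x₀ ∈ C) (xtilde : X) (hxtildeC : xtilde ∈ C)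
    (ω : Y) (hsource : xtilde = P (ContinuousLinearMap.adjoint T₂ ω + x₀))
    (hxtildeMin : IsMinOn (fun x => ‖x - x₀‖) {x ∈ C | T₂ x = T₂ xtilde} xtilde)
    (x₁ x₂ : X) (hx₁C : x₁ ∈ C) (hx₂C : x₂ ∈ C)
    (hx₁ : IsMinOn (fun x => ‖T₁ (x - xtilde)‖ ^ 2 + α * ‖x - x₀‖ ^ 2) C x₁)
    (hx₂ : IsMinOn (fun x => ‖T₂ (x - xtilde)‖ ^ 2 + α * ‖x - x₀‖ ^ 2) C x₂) :
    ‖x₁ - x₂‖ ≤ Real.sqrt (3 / 2) * ‖ω‖ * ‖T₁ - T₂‖ := by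
  set u := x₁ - xtilde with hu
  set v := x₂ - xtilde with hv
  set p1 := T₁ u with hp1
  set p2 := T₂ u with hp2
  set q1 := T₁ v with hq1
  set q2 := T₂ v with hq2
  set e := p1 - q2 with he
  set w := ‖ω‖ with hw
  set δ := ‖T₁ - T₂‖ with hδ
  set s := ‖x₁ - x₂‖ with hs
  have hw0 : 0 ≤ w := norm_nonneg _
  have hδ0 : 0 ≤ δ := norm_nonneg _
  have hs0 : 0 ≤ s := norm_nonneg _
  -- source condition inequality at x₂
  have hsrc : ⟪ω, q2⟫ ≤ ⟪xtilde - x₀, v⟫ := by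
    have h0 := proj_vi C hCconvex P hPmem hPproj (ContinuousLinearMap.adjoint T₂ ω + x₀) x₂ hx₂C
    rw [← hsource] at h0
    have h1 : ContinuousLinearMap.adjoint T₂ ω + x₀ - xtilde
        = ContinuousLinearMap.adjoint T₂ ω - (xtilde - x₀) := by abel
    rw [h1, inner_sub_left, ContinuousLinearMap.adjoint_inner_left] at h0
    linarith
  -- VI for x₂ at xtilde, then source estimate
  have hB : ‖q2‖ ^ 2 + α * ‖v‖ ^ 2 ≤ α * w * ‖q2‖ := by
    have h0 := tikhonov_vi C hCconvex T₂ α x₀ xtilde x₂ hx₂C hx₂ xtilde hxtildeC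
    have e1 : T₂ (xtilde - x₂) = -q2 := by
      rw [hq2, hv, ← map_neg]; congr 1; abel
    have e2 : xtilde - x₂ = -v := by rw [hv]; abel
    rw [e1, e2, inner_neg_right, inner_neg_right] at h0
    have e3 : ⟪x₂ - x₀, v⟫ = ⟪v, v⟫ + ⟪xtilde - x₀, v⟫ := by
      rw [← inner_add_left]; congr 1; rw [hv]; abel
    have e4 : ⟪(q2 : Y), q2⟫ = ‖q2‖ ^ 2 := real_inner_self_eq_norm_sq _
    have e5 : ⟪(v : X), v⟫ = ‖v‖ ^ 2 := real_inner_self_eq_norm_sq _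
    have hcs : -⟪ω, q2⟫ ≤ w * ‖q2‖ := by
      have := abs_real_inner_le_norm ω q2
      have h2 := neg_abs_le ⟪ω, q2⟫
      linarith
    nlinarith [hα, hsrc, h0, e3]
  have ha2 : ‖q2‖ ≤ α * w := by
    by_contra hcon
    push_neg at hcon
    have h0 : 0 < ‖q2‖ := lt_of_le_of_lt (by positivity) hcon
    nlinarith [hB, sq_nonneg ‖v‖]
  have hb2 : ‖v‖ ^ 2 ≤ α * w ^ 2 / 4 := by
    nlinarith [hB, sq_nonneg (‖q2‖ - α * w / 2), hα]
  -- sum of the two cross variational inequalities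
  have hsum : α * s ^ 2 ≤ ⟪q2, T₂ (x₁ - x₂)⟫ - ⟪p1, T₁ (x₁ - x₂)⟫ := by
    have h1 := tikhonov_vi C hCconvex T₁ α x₀ xtilde x₁ hx₁C hx₁ x₂ hx₂C
    have h2 := tikhonov_vi C hCconvex T₂ α x₀ xtilde x₂ hx₂C hx₂ x₁ hx₁C
    have e1 : x₂ - x₁ = -(x₁ - x₂) := by abel
    rw [e1, map_neg, inner_neg_right, inner_neg_right] at h1
    have e2 : ⟪x₂ - x₀, x₁ - x₂⟫ - ⟪x₁ - x₀, x₁ - x₂⟫ = -‖x₁ - x₂‖ ^ 2 := by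
      rw [← inner_sub_left]
      have e3 : x₂ - x₀ - (x₁ - x₀) = -(x₁ - x₂) := by abel
      rw [e3, inner_neg_left, real_inner_self_eq_norm_sq]
    have e2' : α * ⟪x₂ - x₀, x₁ - x₂⟫ - α * ⟪x₁ - x₀, x₁ - x₂⟫ = -(α * ‖x₁ - x₂‖ ^ 2) := by
      linear_combination α * e2
    linarith [h1, h2, e2']
  -- rewrite in terms of p's and q's
  have hT1d : T₁ (x₁ - x₂) = p1 - q1 := by
    rw [hp1, hq1, ← map_sub]; congr 1; rw [hu, hv]; abel
  have hT2d : T₂ (x₁ - x₂) = p2 - q2 := by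
    rw [hp2, hq2, ← map_sub]; congr 1; rw [hu, hv]; abel
  rw [hT1d, hT2d] at hsum
  -- the key algebraic identity
  have hid : ⟪q2, p2 - q2⟫ - ⟪p1, p1 - q1⟫
      = ⟪(p2 - q2) - (p1 - q1), q2⟫ - ⟪q2 - q1, e⟫ - ‖e‖ ^ 2 := by
    rw [he, ← real_inner_self_eq_norm_sq]
    simp only [inner_sub_left, inner_sub_right]
    linarith [real_inner_comm p1 q1, real_inner_comm p1 q2, real_inner_comm p2 q2,
      real_inner_comm q1 q2, real_inner_comm p1 p2, real_inner_comm q2 q2]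
  -- Cauchy–Schwarz bounds
  have hδop : ‖T₂ - T₁‖ = δ := norm_sub_rev _ _
  have hcs1 : ⟪(p2 - q2) - (p1 - q1), q2⟫ ≤ δ * s * ‖q2‖ := by
    have e1 : (p2 - q2) - (p1 - q1) = (T₂ - T₁) (x₁ - x₂) := by
      rw [ContinuousLinearMap.sub_apply, hT1d, hT2d]
    rw [e1]
    calc ⟪(T₂ - T₁) (x₁ - x₂), q2⟫ ≤ ‖(T₂ - T₁) (x₁ - x₂)‖ * ‖q2‖ := real_inner_le_norm _ _
      _ ≤ (δ * s) * ‖q2‖ := by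
          apply mul_le_mul_of_nonneg_right _ (norm_nonneg _)
          rw [← hδop]
          exact (T₂ - T₁).le_opNorm _
  have hcs2 : -⟪q2 - q1, e⟫ ≤ δ * ‖v‖ * ‖e‖ := by
    have e1 : q2 - q1 = (T₂ - T₁) v := by
      rw [ContinuousLinearMap.sub_apply, hq1, hq2]
    have h1 : |⟪q2 - q1, e⟫| ≤ ‖q2 - q1‖ * ‖e‖ := abs_real_inner_le_norm _ _
    have h2 : ‖q2 - q1‖ ≤ δ * ‖v‖ := by
      rw [e1, ← hδop]; exact (T₂ - T₁).le_opNorm _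
    have h3 := neg_abs_le ⟪q2 - q1, e⟫
    nlinarith [norm_nonneg e, norm_nonneg (q2 - q1)]
  -- combine
  have hmain : α * s ^ 2 + ‖e‖ ^ 2 ≤ δ * s * ‖q2‖ + δ * ‖v‖ * ‖e‖ := by linarith
  have hstep : α * s ^ 2 ≤ δ * s * (α * w) + α * δ ^ 2 * w ^ 2 / 16 := by
    nlinarith [hmain, sq_nonneg (‖e‖ - δ * ‖v‖ / 2), hb2, ha2, sq_nonneg δ,
      mul_nonneg (mul_nonneg hδ0 hs0) (norm_nonneg q2),
      mul_le_mul_of_nonneg_left ha2 (mul_nonneg hδ0 hs0)]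
  have hstep2 : s ^ 2 ≤ δ * w * s + δ ^ 2 * w ^ 2 / 16 := by
    nlinarith [hstep, hα]
  have hfin : s ^ 2 ≤ 3 / 2 * (w * δ) ^ 2 := by
    nlinarith [hstep2, sq_nonneg (s - δ * w)]
  have hwd : 0 ≤ w * δ := mul_nonneg hw0 hδ0
  calc s = Real.sqrt (s ^ 2) := (Real.sqrt_sq hs0).symm
    _ ≤ Real.sqrt (3 / 2 * (w * δ) ^ 2) := Real.sqrt_le_sqrt hfin
    _ = Real.sqrt (3 / 2) * (w * δ) := by
        rw [Real.sqrt_mul (by norm_num), Real.sqrt_sq hwd]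
    _ = Real.sqrt (3 / 2) * w * δ := by ring
end

section
/- Recursive error estimate for the constrained iteratively regularized Gauß–Newton method: suppose x_n ∈ C satisfies ‖x_n − x†‖ ≤ γ, and let x_{n+1} be the minimizer over C of x ↦ ‖F_δ'[x_n](x − x_n) + F_δ(x_n) − g_δ‖² + α_n‖x − x₀‖². Then the error e_n := x_n − x† satisfies ‖e_{n+1}‖ ≤ (1/√α_n)·(L/2)·‖e_n‖² + √(3/2)·ρ·L·‖e_n‖ + (δ_g + δ_F)/√α_n + √α_n·ρ + √(3/2)·ρ·δ_{F'}. -/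
local notation "⟪" x ", " y "⟫_ℝ" => @inner ℝ _ _ x y

set_option maxHeartbeats 2000000


/-- **Recursive error estimate for the constrained IRGNM** (Lemma 3 of the paper).
Suppose `x_n ∈ C` with `‖x_n − x†‖ ≤ γ` and let `x_{n+1}` minimize
`x ↦ ‖F_δ'[x_n](x − x_n) + F_δ(x_n) − g_δ‖² + α_n ‖x − x₀‖²` over `C`. Then the error
`e_n := x_n − x†` satisfies
`‖e_{n+1}‖ ≤ (L/2)‖e_n‖²/√α_n + √(3/2)·ρ·L·‖e_n‖ + (δ_g + δ_F)/√α_n + √α_n·ρ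
  + √(3/2)·ρ·δ_{F'}`. -/
theorem irgnm_recursive_error_estimate
    {X Y : Type*} [NormedAddCommGroup X] [InnerProductSpace ℝ X] [CompleteSpace X]
    [NormedAddCommGroup Y] [InnerProductSpace ℝ Y] [CompleteSpace Y]
    (C : Set X) (hC : C.Nonempty) (hCclosed : IsClosed C) (hCconvex : Convex ℝ C)
    (P : X → X) (hPmem : ∀ z, P z ∈ C)
    (hPproj : ∀ z, ∀ w ∈ C, ‖z - P z‖ ≤ ‖z - w‖)
    -- the operators and their derivatives (differentiability within C)
    (F Fδ : X → Y) (F' Fδ' : X → X →L[ℝ] Y)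
    (hFdiff : ∀ x ∈ C, HasFDerivWithinAt F (F' x) C x)
    (hFδdiff : ∀ x ∈ C, HasFDerivWithinAt Fδ (Fδ' x) C x)
    -- exact solution and data
    (xdag : X) (hxdagC : xdag ∈ C) (g : Y) (hg : F xdag = g) (gδ : Y)
    -- error bounds
    (δg δF δF' : ℝ) (hδg0 : 0 ≤ δg) (hδF0 : 0 ≤ δF) (hδF'0 : 0 ≤ δF')
    (hδg : ‖g - gδ‖ ≤ δg)
    (hδF : ‖F xdag - Fδ xdag‖ ≤ δF)
    (hδF' : ‖F' xdag - Fδ' xdag‖ ≤ δF')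
    -- source condition
    (x₀ : X) (hx₀C : x₀ ∈ C) (ω : Y) (ρ : ℝ)
    (hsource : xdag = P (ContinuousLinearMap.adjoint (F' xdag) ω + x₀))
    (hω : ‖ω‖ ≤ ρ)
    -- minimum-norm property on the linearized solution set
    (hxdagMin : IsMinOn (fun x => ‖x - x₀‖) {x ∈ C | F' xdag (x - xdag) = 0} xdag)
    -- Lipschitz condition on the derivative of `F_δ` and resulting Taylor remainder bound
    (γ L : ℝ) (hγ : 0 < γ) (hL : 0 < L)
    (hLip : ∀ x ∈ C, ‖x - xdag‖ ≤ γ → ‖Fδ' x - Fδ' xdag‖ ≤ L * ‖x - xdag‖)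
    (hTaylor : ∀ x ∈ C, ‖x - xdag‖ ≤ γ →
      ‖Fδ xdag - Fδ x - Fδ' x (xdag - x)‖ ≤ L / 2 * ‖xdag - x‖ ^ 2)
    -- current iterate and Newton step
    (αn : ℝ) (hαn : 0 < αn)
    (xn : X) (hxnC : xn ∈ C) (hxnγ : ‖xn - xdag‖ ≤ γ)
    (xn1 : X) (hxn1C : xn1 ∈ C)
    (hxn1 : IsMinOn
      (fun x => ‖Fδ' xn (x - xn) + Fδ xn - gδ‖ ^ 2 + αn * ‖x - x₀‖ ^ 2) C xn1) :
    ‖xn1 - xdag‖ ≤ 1 / Real.sqrt αn * (L / 2) * ‖xn - xdag‖ ^ 2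
      + Real.sqrt (3 / 2) * ρ * L * ‖xn - xdag‖
      + (δg + δF) / Real.sqrt αn + Real.sqrt αn * ρ
      + Real.sqrt (3 / 2) * ρ * δF' := by
  classical
  set T : X →L[ℝ] Y := Fδ' xn with hTdef
  set e : X := xn1 - xdag with hedef
  set En : ℝ := ‖xn - xdag‖ with hEndef
  set E : ℝ := ‖xn1 - xdag‖ with hEdef
  set q : ℝ := L / 2 * En ^ 2 + δF + δg with hqdef
  set p : ℝ := δF' + L * En with hpdef
  set b : Y := T (xn1 - xn) + Fδ xn - gδ with hbdef
  set sres : Y := T (xdag - xn) + Fδ xn - gδ with hsdef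
  clear_value T e En E q p b sres
  have hxnγ' : ‖xn - xdag‖ ≤ γ := hEndef ▸ hxnγ
  have hρ0 : 0 ≤ ρ := le_trans (norm_nonneg ω) hω
  have hEn0 : 0 ≤ En := by rw [hEndef]; exact norm_nonneg _
  have hE0 : 0 ≤ E := by rw [hEdef]; exact norm_nonneg _
  have hq0 : 0 ≤ q := by rw [hqdef]; positivity
  have hp0 : 0 ≤ p := by rw [hpdef]; positivity
  -- Step A : the linearized residual at xdag
  have hsq : ‖sres‖ ≤ q := by
    have hT1 : ‖Fδ xdag - Fδ xn - T (xdag - xn)‖ ≤ L / 2 * En ^ 2 := by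
      rw [hTdef, hEndef]
      have h := hTaylor xn hxnC hxnγ'
      rwa [norm_sub_rev xdag xn] at h
    have hdec : sres = -(Fδ xdag - Fδ xn - T (xdag - xn)) + (Fδ xdag - F xdag) + (g - gδ) := by
      rw [hsdef, ← hg]; abel
    rw [hdec]
    calc ‖-(Fδ xdag - Fδ xn - T (xdag - xn)) + (Fδ xdag - F xdag) + (g - gδ)‖
        ≤ ‖-(Fδ xdag - Fδ xn - T (xdag - xn))‖ + ‖Fδ xdag - F xdag‖ + ‖g - gδ‖ :=
          norm_add₃_le
      _ ≤ L / 2 * En ^ 2 + δF + δg := by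
          rw [norm_neg, norm_sub_rev (Fδ xdag)]
          exact add_le_add (add_le_add hT1 hδF) hδg
      _ = q := hqdef.symm
  -- Step B : operator error
  have hTp : ‖F' xdag - T‖ ≤ p := by
    rw [hTdef, hpdef, hEndef]
    have h1 := hLip xn hxnC hxnγ'
    calc ‖F' xdag - Fδ' xn‖ = ‖(F' xdag - Fδ' xdag) + (Fδ' xdag - Fδ' xn)‖ := by
          congr 1; abel
      _ ≤ ‖F' xdag - Fδ' xdag‖ + ‖Fδ' xdag - Fδ' xn‖ := norm_add_le _ _
      _ ≤ δF' + L * ‖xn - xdag‖ := add_le_add hδF' (by rw [norm_sub_rev]; exact h1)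
  -- Step C : variational inequality from the projection (source condition)
  have hVI : ⟪ContinuousLinearMap.adjoint (F' xdag) ω + x₀ - xdag, e⟫_ℝ ≤ 0 := by
    set z : X := ContinuousLinearMap.adjoint (F' xdag) ω + x₀ with hzdef
    haveI : Nonempty C := ⟨⟨xdag, hxdagC⟩⟩
    have hinf : ‖z - xdag‖ = ⨅ w : C, ‖z - w‖ := by
      apply le_antisymm
      · exact le_ciInf fun w => by
          have := hPproj z w w.2
          rwa [← hsource] at this
      · have hbdd : BddBelow (Set.range fun w : C => ‖z - (w : X)‖) := by
          refine ⟨0, ?_⟩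
          rintro r ⟨w, rfl⟩
          positivity
        exact ciInf_le hbdd ⟨xdag, hxdagC⟩
    have hvi := (norm_eq_iInf_iff_real_inner_le_zero hCconvex hxdagC).mp hinf xn1 hxn1C
    rw [hedef]
    exact hvi
  -- Step D : first-order optimality of xn1
  have hopt : ⟪b, T e⟫_ℝ + αn * ⟪xn1 - x₀, e⟫_ℝ ≤ 0 := by
    set h : X := xdag - xn1 with hhdef
    clear_value h
    have key : ∀ t : ℝ, 0 < t → t ≤ 1 →
        0 ≤ 2 * t * (⟪b, T h⟫_ℝ + αn * ⟪xn1 - x₀, h⟫_ℝ)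
          + t ^ 2 * (‖T h‖ ^ 2 + αn * ‖h‖ ^ 2) := by
      intro t ht ht1
      have hmem : xn1 + t • h ∈ C := by
        have hc := hCconvex hxn1C hxdagC (by linarith only [ht1] : (0:ℝ) ≤ 1 - t) ht.le (by ring)
        have : (1 - t) • xn1 + t • xdag = xn1 + t • h := by
          rw [hhdef]; module
        rwa [this] at hc
      have hmin := hxn1 hmem
      simp only [Set.mem_setOf_eq] at hmin
      have e1 : T (xn1 + t • h - xn) + Fδ xn - gδ = b + t • T h := by
        have h2 : xn1 + t • h - xn = (xn1 - xn) + t • h := by abel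
        rw [h2, map_add, map_smul, hbdef]; abel
      have e2 : xn1 + t • h - x₀ = (xn1 - x₀) + t • h := by abel
      rw [e1, e2] at hmin
      rw [← hbdef] at hmin
      have n1 : ‖b + t • T h‖ ^ 2 = ‖b‖ ^ 2 + 2 * (t * ⟪b, T h⟫_ℝ) + t ^ 2 * ‖T h‖ ^ 2 := by
        rw [norm_add_sq_real, real_inner_smul_right, norm_smul]
        rw [Real.norm_eq_abs, mul_pow, sq_abs]
      have n2 : ‖(xn1 - x₀) + t • h‖ ^ 2
          = ‖xn1 - x₀‖ ^ 2 + 2 * (t * ⟪xn1 - x₀, h⟫_ℝ) + t ^ 2 * ‖h‖ ^ 2 := by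
        rw [norm_add_sq_real, real_inner_smul_right, norm_smul]
        rw [Real.norm_eq_abs, mul_pow, sq_abs]
      rw [n1, n2] at hmin
      linarith only [hmin]
    set K : ℝ := ⟪b, T h⟫_ℝ + αn * ⟪xn1 - x₀, h⟫_ℝ with hKdef
    set M : ℝ := ‖T h‖ ^ 2 + αn * ‖h‖ ^ 2 with hMdef
    clear_value K M
    have hM : 0 ≤ M := by rw [hMdef]; positivity
    have hK : 0 ≤ K := by
      by_contra hneg
      push_neg at hneg
      set t : ℝ := min 1 ((-K) / (M + 1)) with htdef
      have ht0 : 0 < t := lt_min one_pos (div_pos (neg_pos.2 hneg) (by linarith only [hM]))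
      have ht1 : t ≤ 1 := min_le_left _ _
      have h2 := key t ht0 ht1
      have htM : t * M ≤ -K := by
        calc t * M ≤ (-K) / (M + 1) * M :=
              mul_le_mul_of_nonneg_right (min_le_right _ _) hM
          _ ≤ -K := by
              rw [div_mul_eq_mul_div, div_le_iff₀ (by linarith only [hM] : (0:ℝ) < M + 1)]
              linarith only [neg_pos.2 hneg]
      linarith only [h2, mul_le_mul_of_nonneg_left htM ht0.le,
        mul_neg_of_pos_of_neg ht0 hneg]
    have hhe : h = -e := by rw [hhdef, hedef]; abel
    rw [hKdef, hhe, map_neg, inner_neg_right, inner_neg_right] at hK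
    linarith only [hK]
  -- assemble the main quadratic inequality
  have hTe : T e = b - sres := by
    have h2 : e = (xn1 - xn) - (xdag - xn) := by rw [hedef]; abel
    rw [h2, map_sub, hbdef, hsdef]; abel
  set B : ℝ := ‖b‖ with hBdef
  clear_value B
  have hB0 : 0 ≤ B := by rw [hBdef]; exact norm_nonneg _
  have ib1 : ⟪b, sres⟫_ℝ ≤ B * q := by
    rw [hBdef]
    exact le_trans (real_inner_le_norm b sres)
      (mul_le_mul_of_nonneg_left hsq (norm_nonneg b))
  have ibTe : ⟪b, T e⟫_ℝ = B ^ 2 - ⟪b, sres⟫_ℝ := by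
    rw [hTe, inner_sub_right, real_inner_self_eq_norm_sq, ← hBdef]
  have hTeN : ‖T e‖ ≤ B + q := by
    rw [hTe]; exact le_trans (norm_sub_le _ _) (by linarith)
  have ib2 : -(ρ * (B + q)) ≤ ⟪ω, T e⟫_ℝ := by
    have h1 : |⟪ω, T e⟫_ℝ| ≤ ‖ω‖ * ‖T e‖ := abs_real_inner_le_norm ω (T e)
    have h2 : ‖ω‖ * ‖T e‖ ≤ ρ * (B + q) :=
      mul_le_mul hω hTeN (norm_nonneg _) hρ0
    have h3 := neg_abs_le ⟪ω, T e⟫_ℝ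
    linarith only [h1, h2, h3]
  have ib3 : -(ρ * (p * E)) ≤ ⟪ω, (F' xdag - T) e⟫_ℝ := by
    have hEe : ‖(F' xdag - T) e‖ ≤ p * E := by
      calc ‖(F' xdag - T) e‖ ≤ ‖F' xdag - T‖ * ‖e‖ := ContinuousLinearMap.le_opNorm _ _
        _ ≤ p * E := by
            rw [hEdef, hedef]
            exact mul_le_mul_of_nonneg_right hTp (norm_nonneg _)
    have h1 : |⟪ω, (F' xdag - T) e⟫_ℝ| ≤ ‖ω‖ * ‖(F' xdag - T) e‖ :=
      abs_real_inner_le_norm _ _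
    have h2 : ‖ω‖ * ‖(F' xdag - T) e‖ ≤ ρ * (p * E) :=
      mul_le_mul hω hEe (norm_nonneg _) hρ0
    have h3 := neg_abs_le ⟪ω, (F' xdag - T) e⟫_ℝ
    linarith only [h1, h2, h3]
  have isplit : ⟪ω, F' xdag e⟫_ℝ = ⟪ω, T e⟫_ℝ + ⟪ω, (F' xdag - T) e⟫_ℝ := by
    rw [ContinuousLinearMap.sub_apply, inner_sub_right]; ring
  have iadj : ⟪ContinuousLinearMap.adjoint (F' xdag) ω, e⟫_ℝ = ⟪ω, F' xdag e⟫_ℝ :=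
    ContinuousLinearMap.adjoint_inner_left _ _ _
  have hVI' : ⟪ω, F' xdag e⟫_ℝ ≤ ⟪xdag - x₀, e⟫_ℝ := by
    have h1 : ⟪ContinuousLinearMap.adjoint (F' xdag) ω + x₀ - xdag, e⟫_ℝ
        = ⟪ContinuousLinearMap.adjoint (F' xdag) ω, e⟫_ℝ + ⟪x₀ - xdag, e⟫_ℝ := by
      rw [← inner_add_left]; congr 1; abel
    have h2 : ⟪x₀ - xdag, e⟫_ℝ = -⟪xdag - x₀, e⟫_ℝ := by
      rw [← inner_neg_left]; congr 1; abel
    rw [h1, h2, iadj] at hVI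
    linarith only [hVI]
  have ixsplit : ⟪xn1 - x₀, e⟫_ℝ = E ^ 2 + ⟪xdag - x₀, e⟫_ℝ := by
    have h1 : xn1 - x₀ = e + (xdag - x₀) := by rw [hedef]; abel
    rw [h1, inner_add_left, real_inner_self_eq_norm_sq, hEdef, hedef]
  have hmain : αn * E ^ 2 + B ^ 2 ≤ B * q + αn * (ρ * (B + q)) + αn * (ρ * (p * E)) := by
    have c1 : αn * ⟪ω, F' xdag e⟫_ℝ ≤ αn * ⟪xdag - x₀, e⟫_ℝ :=
      mul_le_mul_of_nonneg_left hVI' hαn.le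
    have c2 : -(ρ * (B + q)) + -(ρ * (p * E)) ≤ ⟪ω, F' xdag e⟫_ℝ := by
      rw [isplit]; linarith only [ib2, ib3]
    have c3 : αn * (-(ρ * (B + q)) + -(ρ * (p * E))) ≤ αn * ⟪ω, F' xdag e⟫_ℝ :=
      mul_le_mul_of_nonneg_left c2 hαn.le
    rw [ixsplit] at hopt
    rw [ibTe] at hopt
    linarith only [c1, c3, hopt, ib1]
  -- final algebra
  set st : ℝ := Real.sqrt αn with hstdef
  clear_value st
  have hst2 : st ^ 2 = αn := by rw [hstdef]; exact Real.sq_sqrt hαn.le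
  have hst0 : 0 < st := by rw [hstdef]; exact Real.sqrt_pos.2 hαn
  set K : ℝ := q / st + st * ρ with hKdef
  clear_value K
  have hK0 : 0 ≤ K :=
    hKdef ▸ add_nonneg (div_nonneg hq0 hst0.le) (mul_nonneg hst0.le hρ0)
  have hstK : st * K = q + αn * ρ := by
    rw [hKdef, mul_add, ← mul_assoc, ← hst2]
    rw [mul_div_cancel₀ _ hst0.ne']
    ring
  have hKsq : αn * K ^ 2 = (q + αn * ρ) ^ 2 := by
    rw [← hstK, ← hst2]; ring
  have h1 : αn * E ^ 2 ≤ (q + αn * ρ) ^ 2 / 4 + αn * (ρ * q) + αn * (ρ * (p * E)) := by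
    linarith only [hmain, sq_nonneg (2 * B - (q + αn * ρ))]
  have h2' : αn * E ^ 2 ≤ αn * (K ^ 2 + ρ * p * E) := by
    linarith only [h1, hKsq, sq_nonneg (q - αn * ρ),
      mul_nonneg (mul_nonneg hαn.le hρ0) hq0]
  have h2 : E ^ 2 ≤ K ^ 2 + ρ * p * E := le_of_mul_le_mul_left h2' hαn
  have h3 : E ≤ ρ * p + K := by
    rcases le_or_gt E K with hEK | hEK
    · linarith only [hEK, mul_nonneg hρ0 hp0]
    · rcases eq_or_lt_of_le hE0 with hE' | hE'
      · linarith only [hE'.symm ▸ hK0, hE', mul_nonneg hρ0 hp0, hK0]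
      · have h5 : 0 ≤ (E - K) * K := mul_nonneg (by linarith only [hEK]) hK0
        have h4 : (E - K) * E ≤ ρ * p * E := by linarith only [h2, h5]
        have h6 : E - K ≤ ρ * p := le_of_mul_le_mul_right h4 hE'
        linarith only [h6]
  have hrt : 1 ≤ Real.sqrt (3 / 2) := by
    rw [show (1:ℝ) = Real.sqrt 1 from (Real.sqrt_one).symm]
    exact Real.sqrt_le_sqrt (by norm_num)
  have hfinal : 1 / st * (L / 2) * En ^ 2 + Real.sqrt (3 / 2) * ρ * L * En
      + (δg + δF) / st + st * ρ + Real.sqrt (3 / 2) * ρ * δF'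
      = K + Real.sqrt (3 / 2) * ρ * p := by
    rw [hKdef, hqdef, hpdef]
    field_simp
    ring
  rw [hfinal]
  have : ρ * p ≤ Real.sqrt (3 / 2) * ρ * p := by
    have h7 := mul_le_mul_of_nonneg_right hrt (mul_nonneg hρ0 hp0)
    linarith only [h7]
  linarith only [h3, this]
end

section
/- Convergence rate of the constrained IRGNM for exact data: assume δ_g = δ_F = δ_{F'} = 0 (so g_δ = g and F_δ agrees with F at x† to the stated accuracy). Set Θ₀ := ‖x₀ − x†‖/√α₀, a := √r·ρ, b := √(3r/2)·ρ·L, c := √r·L/2, D := (1−b)² − 4ac, t₁ := 2a/(1−b+√D), t₂ := (1−b+√D)/(2c), and C_Θ := max(Θ₀, t₁). If b + 2√(ac) < 1, Θ₀ ≤ t₂, and √α₀·C_Θ ≤ γ, then the IRGNM iterates satisfy ‖x_n − x†‖ ≤ C_Θ·√α_n for all n ≥ 0; in particular ‖x_n − x†‖ ≤ γ for all n and ‖x_n − x†‖ = O(√α_n) as n → ∞. -/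
open scoped RealInnerProductSpace

lemma aux_nonpos (K M : ℝ) (hM : 0 ≤ M) (h : ∀ t : ℝ, 0 < t → t ≤ 1 → K ≤ t * M) : K ≤ 0 := by
  by_contra hK
  push_neg at hK
  rcases eq_or_lt_of_le hM with hM0 | hM0
  · have := h 1 one_pos le_rfl; nlinarith
  · have ht : 0 < min 1 (K / (2*M)) := lt_min one_pos (by positivity)
    have h1 := h _ ht (min_le_left _ _)
    have h2 : min 1 (K/(2*M)) * M ≤ (K/(2*M))*M :=
      mul_le_mul_of_nonneg_right (min_le_right _ _) hM
    have h3 : (K/(2*M))*M = K/2 := by field_simp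
    linarith

lemma aux_quad_root (d B E : ℝ) (hd : 0 ≤ d) (hB : 0 ≤ B) (hE : 0 ≤ E)
    (h : d^2 ≤ E^2 + B*d) : d ≤ B + E := by
  nlinarith [sq_nonneg (d - E), sq_nonneg (d + E), mul_nonneg hB hE, mul_nonneg hd hE]

lemma aux_fixed_point (a b c D t₁ t₂ Θ₀ CΘ : ℝ)
    (ha : 0 ≤ a) (hb : 0 ≤ b) (hc : 0 < c)
    (hD : D = (1-b)^2 - 4*a*c)
    (ht₁ : t₁ = 2*a/(1-b+Real.sqrt D))
    (ht₂ : t₂ = (1-b+Real.sqrt D)/(2*c))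
    (hsmall : b + 2*Real.sqrt (a*c) < 1)
    (hΘ₀ : 0 ≤ Θ₀) (hΘt₂ : Θ₀ ≤ t₂)
    (hCΘ : CΘ = max Θ₀ t₁) :
    a + b*CΘ + c*CΘ^2 ≤ CΘ ∧ 0 ≤ CΘ := by
  have hac : 0 ≤ a*c := mul_nonneg ha hc.le
  have hs : Real.sqrt (a*c)^2 = a*c := Real.sq_sqrt hac
  have hsn : 0 ≤ Real.sqrt (a*c) := Real.sqrt_nonneg _
  have hDpos : 0 < D := by nlinarith
  have hsD : Real.sqrt D ^ 2 = D := Real.sq_sqrt hDpos.le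
  have hsDn : 0 ≤ Real.sqrt D := Real.sqrt_nonneg _
  have hden : 0 < 1 - b + Real.sqrt D := by nlinarith
  have hprod : c * (t₁ * t₂) = a := by
    rw [ht₁, ht₂]; field_simp
  have hsum : c * (t₁ + t₂) = 1 - b := by
    rw [ht₁, ht₂]; field_simp; nlinarith [hsD]
  have ht₁₂ : t₁ ≤ t₂ := by
    rw [ht₁, ht₂, div_le_div_iff₀ hden (by linarith)]
    nlinarith [hsD]
  have hC2 : CΘ ≤ t₂ := by rw [hCΘ]; exact max_le hΘt₂ ht₁₂
  have hC1 : t₁ ≤ CΘ := by rw [hCΘ]; exact le_max_right _ _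
  have hC0 : 0 ≤ CΘ := by rw [hCΘ]; exact le_trans hΘ₀ (le_max_left _ _)
  refine ⟨?_, hC0⟩
  nlinarith [mul_nonneg (mul_nonneg hc.le (sub_nonneg.2 hC1)) (sub_nonneg.2 hC2), hC0]

lemma proj_char {X : Type*} [NormedAddCommGroup X] [InnerProductSpace ℝ X]
    (C : Set X) (hCconvex : Convex ℝ C) (P : X → X) (hPmem : ∀ z, P z ∈ C)
    (hPproj : ∀ z, ∀ w ∈ C, ‖z - P z‖ ≤ ‖z - w‖) (z w : X) (hw : w ∈ C) :
    ⟪z - P z, w - P z⟫ ≤ 0 := by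
  have key : ∀ t : ℝ, 0 < t → t ≤ 1 → 2*⟪z - P z, w - P z⟫ ≤ t * ‖w - P z‖^2 := by
    intro t ht ht1
    have hmem : (1-t) • P z + t • w ∈ C := hCconvex (hPmem z) hw (by linarith) ht.le (by ring)
    have hle := hPproj z _ hmem
    have e0 : z - ((1-t) • P z + t • w) = (z - P z) - t • (w - P z) := by module
    rw [e0] at hle
    have hsq : ‖z - P z‖^2 ≤ ‖(z - P z) - t • (w - P z)‖^2 :=
      pow_le_pow_left₀ (norm_nonneg _) hle 2
    have hexp : ‖(z - P z) - t • (w - P z)‖^2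
        = ‖z - P z‖^2 - 2*(t*⟪z - P z, w - P z⟫) + t^2*‖w - P z‖^2 := by
      rw [norm_sub_sq_real, real_inner_smul_right, norm_smul, Real.norm_eq_abs, mul_pow, sq_abs]
    rw [hexp] at hsq
    have h4 : 0 ≤ t * (t*‖w - P z‖^2 - 2*⟪z - P z, w - P z⟫) := by nlinarith [hsq]
    nlinarith [h4, ht]
  have := aux_nonpos _ _ (sq_nonneg ‖w - P z‖) key
  linarith

lemma variational_ineq {X Y : Type*} [NormedAddCommGroup X] [InnerProductSpace ℝ X]
    [NormedAddCommGroup Y] [InnerProductSpace ℝ Y]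
    (C : Set X) (hCconvex : Convex ℝ C) (T : X →L[ℝ] Y) (q : Y) (x₀ xn s z : X)
    (α : ℝ) (hα : 0 < α) (hs : s ∈ C) (hz : z ∈ C)
    (hmin : IsMinOn (fun u => ‖T (u - xn) + q‖^2 + α * ‖u - x₀‖^2) C s) :
    0 ≤ ⟪T (s - xn) + q, T (z - s)⟫ + α * ⟪s - x₀, z - s⟫ := by
  have key : ∀ t : ℝ, 0 < t → t ≤ 1 →
      -(2*(⟪T (s - xn) + q, T (z - s)⟫ + α * ⟪s - x₀, z - s⟫)) ≤
        t * (‖T (z - s)‖^2 + α * ‖z - s‖^2) := by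
    intro t ht ht1
    have hmem : (1-t) • s + t • z ∈ C := hCconvex hs hz (by linarith) ht.le (by ring)
    have hle := isMinOn_iff.mp hmin _ hmem
    have e0 : (1-t) • s + t • z - xn = (s - xn) + t • (z - s) := by module
    have e1 : T ((1-t) • s + t • z - xn) + q = (T (s - xn) + q) + t • T (z - s) := by
      rw [e0, map_add, map_smul]; abel
    have e2 : (1-t) • s + t • z - x₀ = (s - x₀) + t • (z - s) := by module
    have hexp1 : ‖(T (s - xn) + q) + t • T (z - s)‖^2
        = ‖T (s - xn) + q‖^2 + 2*(t*⟪T (s - xn) + q, T (z - s)⟫) + t^2*‖T (z - s)‖^2 := by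
      rw [norm_add_sq_real, real_inner_smul_right, norm_smul, Real.norm_eq_abs, mul_pow, sq_abs]
    have hexp2 : ‖(s - x₀) + t • (z - s)‖^2
        = ‖s - x₀‖^2 + 2*(t*⟪s - x₀, z - s⟫) + t^2*‖z - s‖^2 := by
      rw [norm_add_sq_real, real_inner_smul_right, norm_smul, Real.norm_eq_abs, mul_pow, sq_abs]
    rw [e1, e2, hexp1, hexp2] at hle
    have h4 : 0 ≤ t * (2*(⟪T (s - xn) + q, T (z - s)⟫ + α * ⟪s - x₀, z - s⟫)
        + t*(‖T (z - s)‖^2 + α*‖z - s‖^2)) := by nlinarith [hle]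
    nlinarith [h4, ht]
  have hM : 0 ≤ ‖T (z - s)‖^2 + α * ‖z - s‖^2 := by positivity
  have := aux_nonpos _ _ hM key
  linarith
set_option maxHeartbeats 1000000 in
/-- **Convergence rate of the constrained IRGNM for exact data** (Theorem 1, noise-free
case). With `δ_g = δ_F = δ_{F'} = 0`, setting `Θ₀ := ‖x₀ − x†‖/√α₀`, `a := √r·ρ`,
`b := √(3r/2)·ρ·L`, `c := √r·L/2`, `D := (1−b)² − 4ac`, `t₁ := 2a/(1−b+√D)`,
`t₂ := (1−b+√D)/(2c)` and `C_Θ := max(Θ₀, t₁)`, if `b + 2√(ac) < 1`, `Θ₀ ≤ t₂` and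
`√α₀·C_Θ ≤ γ`, then the IRGNM iterates satisfy `‖x_n − x†‖ ≤ C_Θ·√α_n` for all `n`;
in particular `‖x_n − x†‖ ≤ γ` for all `n` (and `‖x_n − x†‖ = O(√α_n)`). -/
theorem irgnm_convergence_exact_data
    {X Y : Type*} [NormedAddCommGroup X] [InnerProductSpace ℝ X] [CompleteSpace X]
    [NormedAddCommGroup Y] [InnerProductSpace ℝ Y] [CompleteSpace Y]
    (C : Set X) (hC : C.Nonempty) (hCclosed : IsClosed C) (hCconvex : Convex ℝ C)
    (P : X → X) (hPmem : ∀ z, P z ∈ C)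
    (hPproj : ∀ z, ∀ w ∈ C, ‖z - P z‖ ≤ ‖z - w‖)
    (F Fδ : X → Y) (F' Fδ' : X → X →L[ℝ] Y)
    (hFdiff : ∀ x ∈ C, HasFDerivWithinAt F (F' x) C x)
    (hFδdiff : ∀ x ∈ C, HasFDerivWithinAt Fδ (Fδ' x) C x)
    (xdag : X) (hxdagC : xdag ∈ C) (g : Y) (hg : F xdag = g) (gδ : Y)
    -- exact data: all noise levels vanish
    (δg δF δF' : ℝ) (hδg0 : δg = 0) (hδF0 : δF = 0) (hδF'0 : δF' = 0)
    (hδg : ‖g - gδ‖ ≤ δg)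
    (hδF : ‖F xdag - Fδ xdag‖ ≤ δF)
    (hδF' : ‖F' xdag - Fδ' xdag‖ ≤ δF')
    -- source condition
    (x₀ : X) (hx₀C : x₀ ∈ C) (ω : Y) (ρ : ℝ)
    (hsource : xdag = P (ContinuousLinearMap.adjoint (F' xdag) ω + x₀))
    (hω : ‖ω‖ ≤ ρ)
    (hxdagMin : IsMinOn (fun x => ‖x - x₀‖) {x ∈ C | F' xdag (x - xdag) = 0} xdag)
    -- Lipschitz condition and Taylor remainder bound
    (γ L : ℝ) (hγ : 0 < γ) (hL : 0 < L)
    (hLip : ∀ x ∈ C, ‖x - xdag‖ ≤ γ → ‖Fδ' x - Fδ' xdag‖ ≤ L * ‖x - xdag‖)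
    (hTaylor : ∀ x ∈ C, ‖x - xdag‖ ≤ γ →
      ‖Fδ xdag - Fδ x - Fδ' x (xdag - x)‖ ≤ L / 2 * ‖xdag - x‖ ^ 2)
    -- regularization parameters
    (α : ℕ → ℝ) (r : ℝ) (hr : 1 < r) (hαpos : ∀ n, 0 < α n)
    (hαmono : ∀ n, α (n + 1) ≤ α n) (hαr : ∀ n, α n ≤ r * α (n + 1))
    (hαlim : Filter.Tendsto α Filter.atTop (nhds 0))
    -- the IRGNM iterates
    (x : ℕ → X) (hx0 : x 0 = x₀) (hxC : ∀ n, x n ∈ C)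
    (hxmin : ∀ n, IsMinOn
      (fun z => ‖Fδ' (x n) (z - x n) + Fδ (x n) - gδ‖ ^ 2 + α n * ‖z - x₀‖ ^ 2)
      C (x (n + 1)))
    -- the constants of the fixed-point argument
    (Θ₀ a b c D t₁ t₂ CΘ : ℝ)
    (hΘ₀ : Θ₀ = ‖x₀ - xdag‖ / Real.sqrt (α 0))
    (ha : a = Real.sqrt r * ρ)
    (hb : b = Real.sqrt (3 * r / 2) * ρ * L)
    (hc : c = Real.sqrt r * L / 2)
    (hD : D = (1 - b) ^ 2 - 4 * a * c)
    (ht₁ : t₁ = 2 * a / (1 - b + Real.sqrt D))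
    (ht₂ : t₂ = (1 - b + Real.sqrt D) / (2 * c))
    (hCΘ : CΘ = max Θ₀ t₁)
    -- smallness conditions
    (hsmall : b + 2 * Real.sqrt (a * c) < 1)
    (hΘ₀t₂ : Θ₀ ≤ t₂)
    (hγbound : Real.sqrt (α 0) * CΘ ≤ γ) :
    ∀ n, ‖x n - xdag‖ ≤ CΘ * Real.sqrt (α n) ∧ ‖x n - xdag‖ ≤ γ := by
  -- basic positivity facts
  have hρ : 0 ≤ ρ := le_trans (norm_nonneg ω) hω
  have hr0 : (0:ℝ) < r := lt_trans one_pos hr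
  have hsr0 : 0 < Real.sqrt r := Real.sqrt_pos.2 hr0
  -- exact data identities
  have hgδg : gδ = g := by
    rw [hδg0] at hδg
    exact (sub_eq_zero.mp (norm_le_zero_iff.mp hδg)).symm
  have hFδx : Fδ xdag = g := by
    rw [hδF0] at hδF
    rw [← (sub_eq_zero.mp (norm_le_zero_iff.mp hδF))]
    exact hg
  have hFδ'x : Fδ' xdag = F' xdag := by
    rw [hδF'0] at hδF'
    exact (sub_eq_zero.mp (norm_le_zero_iff.mp hδF')).symm
  -- decrease of α
  have hα0 : ∀ n, α n ≤ α 0 := by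
    intro n
    induction n with
    | zero => exact le_rfl
    | succ n ih => exact le_trans (hαmono n) ih
  -- the fixed point inequality
  have hΘ₀0 : 0 ≤ Θ₀ := by rw [hΘ₀]; positivity
  have hfix := aux_fixed_point a b c D t₁ t₂ Θ₀ CΘ
    (by rw [ha]; exact mul_nonneg (Real.sqrt_nonneg r) hρ)
    (by rw [hb]; exact mul_nonneg (mul_nonneg (Real.sqrt_nonneg _) hρ) hL.le)
    (by rw [hc]; exact div_pos (mul_pos hsr0 hL) two_pos)
    hD ht₁ ht₂ hsmall hΘ₀0 hΘ₀t₂ hCΘ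
  obtain ⟨hfix1, hCΘ0⟩ := hfix
  have hΘCΘ : Θ₀ ≤ CΘ := by rw [hCΘ]; exact le_max_left _ _
  intro n
  induction n with
  | zero =>
    have hst0 : 0 < Real.sqrt (α 0) := Real.sqrt_pos.2 (hαpos 0)
    have h1 : ‖x 0 - xdag‖ = Θ₀ * Real.sqrt (α 0) := by
      rw [hx0, hΘ₀, div_mul_cancel₀ _ (ne_of_gt hst0)]
    constructor
    · rw [h1]
      exact mul_le_mul_of_nonneg_right hΘCΘ hst0.le
    · rw [h1]
      calc Θ₀ * Real.sqrt (α 0) ≤ CΘ * Real.sqrt (α 0) :=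
            mul_le_mul_of_nonneg_right hΘCΘ hst0.le
        _ = Real.sqrt (α 0) * CΘ := mul_comm _ _
        _ ≤ γ := hγbound
  | succ n ih =>
    obtain ⟨ih1, ih2⟩ := ih
    have hαn := hαpos n
    have hsα : 0 < Real.sqrt (α n) := Real.sqrt_pos.2 hαn
    have hsα2 : Real.sqrt (α n) ^ 2 = α n := Real.sq_sqrt hαn.le
    -- variational inequality at z = xdag
    have hVI := variational_ineq C hCconvex (Fδ' (x n)) (Fδ (x n) - gδ) x₀ (x n)
      (x (n+1)) xdag (α n) hαn (hxC (n+1)) hxdagC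
      (by
        have := hxmin n
        simp only [add_sub_assoc] at this ⊢
        exact this)
    -- notation
    set T := Fδ' (x n) with hT
    set A := F' xdag with hAdef
    set e := x (n+1) - xdag with he
    set en := x n - xdag with hen
    set w := Fδ (x n) - Fδ xdag - T en with hwdef
    -- rewrite the variational inequality
    have hu : T (x (n+1) - x n) + (Fδ (x n) - gδ) = T e + w := by
      have h1 : x (n+1) - x n = e - en := by rw [he, hen]; abel
      rw [h1, map_sub, hwdef, hgδg, ← hFδx]; abel
    have hTxs : T (xdag - x (n+1)) = -(T e) := by
      have h1 : xdag - x (n+1) = -e := by rw [he]; abel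
      rw [h1, map_neg]
    have i1 : ⟪T e + w, -(T e)⟫ = -(‖T e‖^2 + ⟪w, T e⟫) := by
      rw [inner_neg_right, inner_add_left, real_inner_self_eq_norm_sq]
    have i2 : ⟪x (n+1) - x₀, xdag - x (n+1)⟫ = -‖e‖^2 + ⟪x₀ - xdag, e⟫ := by
      have h1 : x (n+1) - x₀ = e - (x₀ - xdag) := by rw [he]; abel
      have h2 : xdag - x (n+1) = -e := by rw [he]; abel
      rw [h1, h2, inner_neg_right, inner_sub_left, real_inner_self_eq_norm_sq]; ring
    rw [hu, hTxs, i1, i2] at hVI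
    have hdist : α n * (-‖e‖^2 + ⟪x₀ - xdag, e⟫)
        = -(α n * ‖e‖^2) + α n * ⟪x₀ - xdag, e⟫ := by ring
    rw [hdist] at hVI
    have hVI' : α n * ‖e‖^2 ≤ -‖T e‖^2 - ⟪w, T e⟫ + α n * ⟪x₀ - xdag, e⟫ := by
      linarith only [hVI]
    -- Taylor bound
    have hwb : ‖w‖ ≤ L/2 * ‖en‖^2 := by
      have h1 := hTaylor (x n) (hxC n) ih2
      have h2 : Fδ xdag - Fδ (x n) - T (xdag - x n) = -w := by
        have h3 : xdag - x n = -en := by rw [hen]; abel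
        rw [h3, map_neg, hwdef]; abel
      have h4 : ‖xdag - x n‖ = ‖en‖ := by rw [hen, norm_sub_rev]
      rw [h2, norm_neg, h4] at h1
      exact h1
    -- Lipschitz bound relating A and T
    have hAe : ‖A e‖ ≤ ‖T e‖ + L * ‖en‖ * ‖e‖ := by
      have h1 : A e = T e + (A - T) e := by
        rw [ContinuousLinearMap.sub_apply]; abel
      have h2 : ‖(A - T) e‖ ≤ ‖A - T‖ * ‖e‖ := (A - T).le_opNorm e
      have h3 : ‖A - T‖ ≤ L * ‖en‖ := by
        have h4 := hLip (x n) (hxC n) ih2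
        rw [hFδ'x, ← hT, ← hen] at h4
        rw [norm_sub_rev]
        exact h4
      have h5 : ‖A - T‖ * ‖e‖ ≤ L * ‖en‖ * ‖e‖ :=
        mul_le_mul_of_nonneg_right h3 (norm_nonneg e)
      calc ‖A e‖ = ‖T e + (A - T) e‖ := by rw [h1]
        _ ≤ ‖T e‖ + ‖(A - T) e‖ := norm_add_le _ _
        _ ≤ ‖T e‖ + L * ‖en‖ * ‖e‖ := by linarith only [h2, h5]
    -- source condition bound
    have hsrc2 : ⟪x₀ - xdag, e⟫ ≤ ρ * ‖A e‖ := by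
      have h1 := proj_char C hCconvex P hPmem hPproj
        (ContinuousLinearMap.adjoint A ω + x₀) (x (n+1)) (hxC (n+1))
      rw [← hsource] at h1
      rw [← he] at h1
      have h2 : ContinuousLinearMap.adjoint A ω + x₀ - xdag
          = ContinuousLinearMap.adjoint A ω + (x₀ - xdag) := by abel
      rw [h2, inner_add_left, ContinuousLinearMap.adjoint_inner_left] at h1
      have h3 : -⟪ω, A e⟫ ≤ ‖ω‖ * ‖A e‖ := by
        have h5 := abs_real_inner_le_norm ω (A e)
        have h6 := neg_le_abs (⟪ω, A e⟫)
        linarith only [h5, h6]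
      have h4 : ‖ω‖ * ‖A e‖ ≤ ρ * ‖A e‖ :=
        mul_le_mul_of_nonneg_right hω (norm_nonneg _)
      linarith only [h1, h3, h4]
    -- Cauchy-Schwarz on the w term
    have hwTe : -⟪w, T e⟫ ≤ ‖w‖ * ‖T e‖ := by
      have h5 := abs_real_inner_le_norm w (T e)
      have h6 := neg_le_abs (⟪w, T e⟫)
      linarith only [h5, h6]
    -- combine
    have p1 : α n * ⟪x₀ - xdag, e⟫ ≤ α n * (ρ * ‖A e‖) :=
      mul_le_mul_of_nonneg_left hsrc2 hαn.le
    have p2 : α n * (ρ * ‖A e‖) ≤ α n * (ρ * (‖T e‖ + L * ‖en‖ * ‖e‖)) := by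
      apply mul_le_mul_of_nonneg_left _ hαn.le
      exact mul_le_mul_of_nonneg_left hAe hρ
    have p3 : α n * (ρ * (‖T e‖ + L * ‖en‖ * ‖e‖))
        = α n * ρ * ‖T e‖ + α n * ρ * L * ‖en‖ * ‖e‖ := by ring
    have young : (‖w‖ + α n * ρ) * ‖T e‖ - ‖T e‖^2 ≤ (‖w‖ + α n * ρ)^2 / 4 := by
      nlinarith only [sq_nonneg (‖T e‖ - (‖w‖ + α n * ρ)/2)]
    have key2 : α n * ‖e‖^2 ≤ (‖w‖ + α n * ρ)^2 / 4 + α n * ρ * L * ‖en‖ * ‖e‖ := by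
      rw [p3] at p2
      linarith only [hVI', hwTe, p1, p2, young]
    have hQ : (‖w‖ + α n * ρ)^2 ≤ (L/2 * ‖en‖^2 + α n * ρ)^2 := by
      have h0 : 0 ≤ ‖w‖ + α n * ρ := add_nonneg (norm_nonneg w) (mul_nonneg hαn.le hρ)
      have h1 : ‖w‖ + α n * ρ ≤ L/2 * ‖en‖^2 + α n * ρ := by linarith only [hwb]
      nlinarith only [h0, h1]
    have key3 : α n * ‖e‖^2 ≤ (L/2 * ‖en‖^2 + α n * ρ)^2 / 4
        + α n * ρ * L * ‖en‖ * ‖e‖ := by linarith only [key2, hQ]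
    -- divide by α n
    have key4 : ‖e‖^2 ≤ ((L/2 * ‖en‖^2 + α n * ρ)/(2 * Real.sqrt (α n)))^2
        + (ρ * L * ‖en‖) * ‖e‖ := by
      have hE2 : ((L/2 * ‖en‖^2 + α n * ρ)/(2 * Real.sqrt (α n)))^2
          = (L/2 * ‖en‖^2 + α n * ρ)^2/(4 * α n) := by
        rw [div_pow, mul_pow, hsα2]; norm_num
      rw [hE2]
      have h5 : ‖e‖^2 - (ρ * L * ‖en‖) * ‖e‖ ≤ (L/2 * ‖en‖^2 + α n * ρ)^2/(4 * α n) := by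
        rw [le_div_iff₀ (by linarith only [hαn] : (0:ℝ) < 4 * α n)]
        linarith only [key3]
      linarith only [h5]
    have key5 : ‖e‖ ≤ ρ * L * ‖en‖ + (L/2 * ‖en‖^2 + α n * ρ)/(2 * Real.sqrt (α n)) :=
      aux_quad_root _ _ _ (norm_nonneg _)
        (mul_nonneg (mul_nonneg hρ hL.le) (norm_nonneg _))
        (div_nonneg
          (add_nonneg (mul_nonneg (by linarith only [hL] : (0:ℝ) ≤ L/2) (sq_nonneg _))
            (mul_nonneg hαn.le hρ))
          (by linarith only [hsα])) key4
    -- use the induction hypothesis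
    have hdn : ‖en‖ ≤ CΘ * Real.sqrt (α n) := ih1
    have hdn2 : ‖en‖^2 ≤ CΘ^2 * α n := by
      have h6 := mul_le_mul hdn hdn (norm_nonneg en) (mul_nonneg hCΘ0 hsα.le)
      have h7 : CΘ^2 * Real.sqrt (α n)^2 = CΘ^2 * α n := by rw [hsα2]
      linarith only [h6, h7]
    have key6 : ‖e‖ ≤ Real.sqrt (α n) * (ρ/2 + ρ*L*CΘ + L/4*CΘ^2) := by
      have hEbound : (L/2 * ‖en‖^2 + α n * ρ)/(2 * Real.sqrt (α n))
          ≤ Real.sqrt (α n) * (ρ/2) + Real.sqrt (α n) * (L/4*CΘ^2) := by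
        rw [div_le_iff₀ (by linarith only [hsα] : (0:ℝ) < 2 * Real.sqrt (α n))]
        have hq1 : α n * ρ = Real.sqrt (α n)^2 * ρ := by rw [hsα2]
        have hq2 : L/2 * (CΘ^2 * α n) = Real.sqrt (α n)^2 * (L/2 * CΘ^2) := by
          rw [hsα2]; ring
        have hq3 : L/2 * ‖en‖^2 ≤ L/2 * (CΘ^2 * α n) :=
          mul_le_mul_of_nonneg_left hdn2 (by linarith only [hL])
        linarith only [hq1, hq2, hq3]
      have hBbound : ρ * L * ‖en‖ ≤ Real.sqrt (α n) * (ρ*L*CΘ) := by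
        have h8 := mul_le_mul_of_nonneg_left hdn (mul_nonneg hρ hL.le)
        linarith only [h8]
      linarith only [key5, hEbound, hBbound]
    -- pass to α (n+1)
    have hsr : Real.sqrt (α n) ≤ Real.sqrt r * Real.sqrt (α (n+1)) := by
      rw [← Real.sqrt_mul hr0.le]
      exact Real.sqrt_le_sqrt (hαr n)
    have hs' : 0 ≤ Real.sqrt (α (n+1)) := Real.sqrt_nonneg _
    have hM0 : 0 ≤ ρ/2 + ρ*L*CΘ + L/4*CΘ^2 := by
      have h1 : 0 ≤ ρ*L*CΘ := mul_nonneg (mul_nonneg hρ hL.le) hCΘ0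
      have h2 : 0 ≤ L/4*CΘ^2 :=
        mul_nonneg (by linarith only [hL] : (0:ℝ) ≤ L/4) (sq_nonneg CΘ)
      linarith only [h1, h2, hρ]
    have key7 : ‖e‖ ≤ Real.sqrt r * Real.sqrt (α (n+1)) * (ρ/2 + ρ*L*CΘ + L/4*CΘ^2) :=
      le_trans key6 (mul_le_mul_of_nonneg_right hsr hM0)
    -- compare with a, b, c
    have hcomp : Real.sqrt r * (ρ/2 + ρ*L*CΘ + L/4*CΘ^2) ≤ a + b*CΘ + c*CΘ^2 := by
      rw [ha, hb, hc]
      have h1 : Real.sqrt r ≤ Real.sqrt (3*r/2) := Real.sqrt_le_sqrt (by linarith only [hr0])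
      have h2 : 0 ≤ ρ*L*CΘ := mul_nonneg (mul_nonneg hρ hL.le) hCΘ0
      have h3 := mul_le_mul_of_nonneg_right h1 h2
      linarith only [h3, mul_nonneg hsr0.le hρ,
        mul_nonneg (mul_nonneg hsr0.le hL.le) (sq_nonneg CΘ)]
    have final1 : ‖e‖ ≤ CΘ * Real.sqrt (α (n+1)) := by
      calc ‖e‖ ≤ Real.sqrt r * Real.sqrt (α (n+1)) * (ρ/2 + ρ*L*CΘ + L/4*CΘ^2) := key7
        _ = Real.sqrt (α (n+1)) * (Real.sqrt r * (ρ/2 + ρ*L*CΘ + L/4*CΘ^2)) := by ring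
        _ ≤ Real.sqrt (α (n+1)) * CΘ :=
            mul_le_mul_of_nonneg_left (le_trans hcomp hfix1) hs'
        _ = CΘ * Real.sqrt (α (n+1)) := mul_comm _ _
    refine ⟨final1, ?_⟩
    have h1 : Real.sqrt (α (n+1)) ≤ Real.sqrt (α 0) := Real.sqrt_le_sqrt (hα0 (n+1))
    calc ‖e‖ ≤ CΘ * Real.sqrt (α (n+1)) := final1
      _ ≤ CΘ * Real.sqrt (α 0) := mul_le_mul_of_nonneg_left h1 hCΘ0
      _ = Real.sqrt (α 0) * CΘ := mul_comm _ _
      _ ≤ γ := hγbound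
end

section
/- Convergence rate of the constrained IRGNM for noisy data with a priori stopping rule: assume δ̄ := max(δ_g + δ_F, δ_{F'}²) > 0, let η > 0, and let the stopping index N satisfy α_N < η·δ̄ ≤ α_n for all 0 ≤ n < N. Set Θ₀ := ‖x₀ − x†‖/√α₀, a := √r·(ρ + (δ_g + δ_F)/(η·δ̄) + √(3/2)·ρ·δ_{F'}/√(η·δ̄)), b := √(3r/2)·ρ·L, c := √r·L/2, D := (1−b)² − 4ac, t₁ := 2a/(1−b+√D), t₂ := (1−b+√D)/(2c), and C_Θ := max(Θ₀, t₁). If b + 2√(ac) < 1, Θ₀ ≤ t₂, and √α₀·C_Θ ≤ γ, then ‖x_n − x†‖ ≤ C_Θ·√α_n for all 0 ≤ n ≤ N; in particular ‖x_n − x†‖ ≤ γ for all n ≤ N and the final iterate satisfies ‖x_N − x†‖ ≤ C_Θ·√(η·δ̄), i.e. ‖x_N − x†‖ = O(√δ̄). -/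
open scoped InnerProductSpace


private lemma aux_nonneg (M Q : ℝ) (hQ : 0 ≤ Q)
    (h : ∀ t : ℝ, 0 < t → t ≤ 1 → 0 ≤ 2 * t * M + t ^ 2 * Q) : 0 ≤ M := by
  by_contra hM
  push_neg at hM
  rcases eq_or_lt_of_le hQ with hQ0 | hQpos
  · have h1 := h 1 one_pos le_rfl
    rw [← hQ0] at h1
    nlinarith
  · have ht0 : 0 < min 1 (-M / Q) := lt_min one_pos (div_pos (neg_pos.mpr hM) hQpos)
    have h1 := h _ ht0 (min_le_left _ _)
    have h3 : min 1 (-M / Q) * Q ≤ -M := (le_div_iff₀ hQpos).mp (min_le_right _ _)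
    nlinarith [mul_le_mul_of_nonneg_left h3 ht0.le, mul_pos ht0 (neg_pos.mpr hM)]

private lemma proj_vi_s6 {X : Type*} [NormedAddCommGroup X] [InnerProductSpace ℝ X]
    {Cset : Set X} (hconv : Convex ℝ Cset) {z p : X} (hp : p ∈ Cset)
    (hproj : ∀ w ∈ Cset, ‖z - p‖ ≤ ‖z - w‖) {w : X} (hw : w ∈ Cset) :
    ⟪z - p, w - p⟫_ℝ ≤ 0 := by
  have key : 0 ≤ -⟪z - p, w - p⟫_ℝ := by
    apply aux_nonneg _ (‖w - p‖ ^ 2) (sq_nonneg _)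
    intro t ht0 ht1
    have hmem : p + t • (w - p) ∈ Cset := by
      have h := hconv hp hw (by linarith : (0:ℝ) ≤ 1 - t) ht0.le (by ring)
      have e : (1 - t) • p + t • w = p + t • (w - p) := by
        rw [sub_smul, one_smul, smul_sub]; abel
      rwa [e] at h
    have h1 := hproj _ hmem
    have h2 : ‖z - p‖ ^ 2 ≤ ‖z - (p + t • (w - p))‖ ^ 2 :=
      pow_le_pow_left₀ (norm_nonneg _) h1 2
    have e1 : z - (p + t • (w - p)) = (z - p) - t • (w - p) := by abel
    have e3 : ‖(z - p) - t • (w - p)‖ ^ 2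
        = ‖z - p‖ ^ 2 - 2 * (t * ⟪z - p, w - p⟫_ℝ) + t ^ 2 * ‖w - p‖ ^ 2 := by
      rw [norm_sub_sq_real, real_inner_smul_right, norm_smul, Real.norm_eq_abs, mul_pow,
        sq_abs]
    rw [e1, e3] at h2
    nlinarith
  linarith

private lemma min_vi {X Y : Type*} [NormedAddCommGroup X] [InnerProductSpace ℝ X]
    [NormedAddCommGroup Y] [InnerProductSpace ℝ Y]
    {Cset : Set X} (hconv : Convex ℝ Cset) (A : X →L[ℝ] Y) (xc : X) (d : Y)
    (x₀ : X) (αn : ℝ) (hα : 0 ≤ αn) {xm w : X} (hxm : xm ∈ Cset) (hw : w ∈ Cset)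
    (hmin : ∀ z ∈ Cset, ‖A (xm - xc) + d‖ ^ 2 + αn * ‖xm - x₀‖ ^ 2
      ≤ ‖A (z - xc) + d‖ ^ 2 + αn * ‖z - x₀‖ ^ 2) :
    0 ≤ ⟪A (xm - xc) + d, A (w - xm)⟫_ℝ + αn * ⟪xm - x₀, w - xm⟫_ℝ := by
  apply aux_nonneg _ (‖A (w - xm)‖ ^ 2 + αn * ‖w - xm‖ ^ 2)
    (add_nonneg (sq_nonneg _) (mul_nonneg hα (sq_nonneg _)))
  intro t ht0 ht1
  have hmem : xm + t • (w - xm) ∈ Cset := by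
    have h := hconv hxm hw (by linarith : (0:ℝ) ≤ 1 - t) ht0.le (by ring)
    have e : (1 - t) • xm + t • w = xm + t • (w - xm) := by
      rw [sub_smul, one_smul, smul_sub]; abel
    rwa [e] at h
  have h2 := hmin _ hmem
  have e1 : A (xm + t • (w - xm) - xc) + d = (A (xm - xc) + d) + t • A (w - xm) := by
    rw [show xm + t • (w - xm) - xc = (xm - xc) + t • (w - xm) from by abel, map_add,
      map_smul]
    abel
  have e2 : xm + t • (w - xm) - x₀ = (xm - x₀) + t • (w - xm) := by abel
  have e3 : ‖(A (xm - xc) + d) + t • A (w - xm)‖ ^ 2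
      = ‖A (xm - xc) + d‖ ^ 2 + 2 * (t * ⟪A (xm - xc) + d, A (w - xm)⟫_ℝ)
        + t ^ 2 * ‖A (w - xm)‖ ^ 2 := by
    rw [norm_add_sq_real, real_inner_smul_right, norm_smul, Real.norm_eq_abs, mul_pow,
      sq_abs]
  have e4 : ‖(xm - x₀) + t • (w - xm)‖ ^ 2
      = ‖xm - x₀‖ ^ 2 + 2 * (t * ⟪xm - x₀, w - xm⟫_ℝ) + t ^ 2 * ‖w - xm‖ ^ 2 := by
    rw [norm_add_sq_real, real_inner_smul_right, norm_smul, Real.norm_eq_abs, mul_pow,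
      sq_abs]
  rw [e1, e2, e3, e4] at h2
  nlinarith [h2]



set_option maxHeartbeats 1600000

/-- **Convergence rate of the constrained IRGNM for noisy data with a priori stopping
rule** (Theorem 1, noisy case). With `δ̄ := max(δ_g + δ_F, δ_{F'}²) > 0` and stopping
index `N` satisfying `α_N < η·δ̄ ≤ α_n` for `0 ≤ n < N`, setting
`Θ₀ := ‖x₀ − x†‖/√α₀`, `a := √r·(ρ + (δ_g + δ_F)/(η·δ̄) + √(3/2)·ρ·δ_{F'}/√(η·δ̄))`,
`b := √(3r/2)·ρ·L`, `c := √r·L/2`, `D := (1−b)² − 4ac`, `t₁ := 2a/(1−b+√D)`,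
`t₂ := (1−b+√D)/(2c)` and `C_Θ := max(Θ₀, t₁)`, if `b + 2√(ac) < 1`, `Θ₀ ≤ t₂` and
`√α₀·C_Θ ≤ γ`, then `‖x_n − x†‖ ≤ C_Θ·√α_n` and `‖x_n − x†‖ ≤ γ` for all `0 ≤ n ≤ N`,
and the final iterate satisfies `‖x_N − x†‖ ≤ C_Θ·√(η·δ̄)`. -/
theorem irgnm_convergence_noisy_data
    {X Y : Type*} [NormedAddCommGroup X] [InnerProductSpace ℝ X] [CompleteSpace X]
    [NormedAddCommGroup Y] [InnerProductSpace ℝ Y] [CompleteSpace Y]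
    (C : Set X) (hC : C.Nonempty) (hCclosed : IsClosed C) (hCconvex : Convex ℝ C)
    (P : X → X) (hPmem : ∀ z, P z ∈ C)
    (hPproj : ∀ z, ∀ w ∈ C, ‖z - P z‖ ≤ ‖z - w‖)
    (F Fδ : X → Y) (F' Fδ' : X → X →L[ℝ] Y)
    (hFdiff : ∀ x ∈ C, HasFDerivWithinAt F (F' x) C x)
    (hFδdiff : ∀ x ∈ C, HasFDerivWithinAt Fδ (Fδ' x) C x)
    (xdag : X) (hxdagC : xdag ∈ C) (g : Y) (hg : F xdag = g) (gδ : Y)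
    -- noise levels and error bounds
    (δg δF δF' : ℝ) (hδg0 : 0 ≤ δg) (hδF0 : 0 ≤ δF) (hδF'0 : 0 ≤ δF')
    (hδg : ‖g - gδ‖ ≤ δg)
    (hδF : ‖F xdag - Fδ xdag‖ ≤ δF)
    (hδF' : ‖F' xdag - Fδ' xdag‖ ≤ δF')
    (δbar : ℝ) (hδbar : δbar = max (δg + δF) (δF' ^ 2)) (hδbarpos : 0 < δbar)
    -- source condition
    (x₀ : X) (hx₀C : x₀ ∈ C) (ω : Y) (ρ : ℝ)
    (hsource : xdag = P (ContinuousLinearMap.adjoint (F' xdag) ω + x₀))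
    (hω : ‖ω‖ ≤ ρ)
    (hxdagMin : IsMinOn (fun x => ‖x - x₀‖) {x ∈ C | F' xdag (x - xdag) = 0} xdag)
    -- Lipschitz condition and Taylor remainder bound
    (γ L : ℝ) (hγ : 0 < γ) (hL : 0 < L)
    (hLip : ∀ x ∈ C, ‖x - xdag‖ ≤ γ → ‖Fδ' x - Fδ' xdag‖ ≤ L * ‖x - xdag‖)
    (hTaylor : ∀ x ∈ C, ‖x - xdag‖ ≤ γ →
      ‖Fδ xdag - Fδ x - Fδ' x (xdag - x)‖ ≤ L / 2 * ‖xdag - x‖ ^ 2)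
    -- regularization parameters
    (α : ℕ → ℝ) (r : ℝ) (hr : 1 < r) (hαpos : ∀ n, 0 < α n)
    (hαmono : ∀ n, α (n + 1) ≤ α n) (hαr : ∀ n, α n ≤ r * α (n + 1))
    (hαlim : Filter.Tendsto α Filter.atTop (nhds 0))
    -- the IRGNM iterates
    (x : ℕ → X) (hx0 : x 0 = x₀) (hxC : ∀ n, x n ∈ C)
    (hxmin : ∀ n, IsMinOn
      (fun z => ‖Fδ' (x n) (z - x n) + Fδ (x n) - gδ‖ ^ 2 + α n * ‖z - x₀‖ ^ 2)
      C (x (n + 1)))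
    -- a priori stopping rule
    (η : ℝ) (hη : 0 < η) (N : ℕ)
    (hstopN : α N < η * δbar) (hstop : ∀ n < N, η * δbar ≤ α n)
    -- the constants of the fixed-point argument
    (Θ₀ a b c D t₁ t₂ CΘ : ℝ)
    (hΘ₀ : Θ₀ = ‖x₀ - xdag‖ / Real.sqrt (α 0))
    (ha : a = Real.sqrt r *
      (ρ + (δg + δF) / (η * δbar) + Real.sqrt (3 / 2) * ρ * δF' / Real.sqrt (η * δbar)))
    (hb : b = Real.sqrt (3 * r / 2) * ρ * L)
    (hc : c = Real.sqrt r * L / 2)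
    (hD : D = (1 - b) ^ 2 - 4 * a * c)
    (ht₁ : t₁ = 2 * a / (1 - b + Real.sqrt D))
    (ht₂ : t₂ = (1 - b + Real.sqrt D) / (2 * c))
    (hCΘ : CΘ = max Θ₀ t₁)
    -- smallness conditions
    (hsmall : b + 2 * Real.sqrt (a * c) < 1)
    (hΘ₀t₂ : Θ₀ ≤ t₂)
    (hγbound : Real.sqrt (α 0) * CΘ ≤ γ) :
    (∀ n ≤ N, ‖x n - xdag‖ ≤ CΘ * Real.sqrt (α n) ∧ ‖x n - xdag‖ ≤ γ) ∧
      ‖x N - xdag‖ ≤ CΘ * Real.sqrt (η * δbar) := by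
  -- basic positivity facts
  have hρ0 : 0 ≤ ρ := (norm_nonneg ω).trans hω
  have hδ0 : 0 ≤ δg + δF := add_nonneg hδg0 hδF0
  have hηδpos : 0 < η * δbar := mul_pos hη hδbarpos
  have hr0 : (0:ℝ) < r := lt_trans one_pos hr
  have hsrpos : 0 < Real.sqrt r := Real.sqrt_pos.mpr hr0
  have hanti : Antitone α := antitone_nat_of_succ_le hαmono
  have hsqpos : ∀ n, 0 < Real.sqrt (α n) := fun n => Real.sqrt_pos.mpr (hαpos n)
  have hsqr : ∀ n, Real.sqrt (α n) ≤ Real.sqrt r * Real.sqrt (α (n + 1)) := by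
    intro n
    rw [← Real.sqrt_mul hr0.le]
    exact Real.sqrt_le_sqrt (hαr n)
  have hΘ₀0 : 0 ≤ Θ₀ := by
    rw [hΘ₀]; positivity
  have hΘCΘ : Θ₀ ≤ CΘ := by rw [hCΘ]; exact le_max_left _ _
  have hCΘ0 : 0 ≤ CΘ := hΘ₀0.trans hΘCΘ
  have hx0e : Θ₀ * Real.sqrt (α 0) = ‖x₀ - xdag‖ := by
    rw [hΘ₀]; exact div_mul_cancel₀ _ (hsqpos 0).ne'
  -- constants of the fixed point argument
  have hb0 : 0 ≤ b := by
    rw [hb]; exact mul_nonneg (mul_nonneg (Real.sqrt_nonneg _) hρ0) hL.le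
  have ha0 : 0 ≤ a := by
    rw [ha]
    apply mul_nonneg (Real.sqrt_nonneg _)
    have h1 : 0 ≤ (δg + δF) / (η * δbar) := div_nonneg hδ0 hηδpos.le
    have h2 : 0 ≤ Real.sqrt (3 / 2) * ρ * δF' / Real.sqrt (η * δbar) :=
      div_nonneg (mul_nonneg (mul_nonneg (Real.sqrt_nonneg _) hρ0) hδF'0)
        (Real.sqrt_nonneg _)
    linarith only [h1, h2, hρ0]
  have hcpos : 0 < c := by
    rw [hc]; exact div_pos (mul_pos hsrpos hL) two_pos
  have hac : 0 ≤ a * c := mul_nonneg ha0 hcpos.le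
  have hsac : 0 ≤ Real.sqrt (a * c) := Real.sqrt_nonneg _
  have hsac2 : Real.sqrt (a * c) ^ 2 = a * c := Real.sq_sqrt hac
  have h1b : 0 < 1 - b := by linarith only [hsmall, hsac]
  have hD0 : 0 < D := by
    rw [hD]
    have q1 : 0 < 1 - b - 2 * Real.sqrt (a * c) := by linarith only [hsmall]
    have q2 : 0 < 1 - b + 2 * Real.sqrt (a * c) := by linarith only [h1b, hsac]
    nlinarith only [mul_pos q1 q2, hsac2]
  have hS2 : Real.sqrt D ^ 2 = D := Real.sq_sqrt hD0.le
  have hSpos : 0 < Real.sqrt D := Real.sqrt_pos.mpr hD0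
  have hden : 0 < 1 - b + Real.sqrt D := by linarith only [h1b, hSpos]
  have hden2 : (1 - b + Real.sqrt D) ^ 2
      = 2 * (1 - b) * (1 - b + Real.sqrt D) - 4 * a * c := by
    linear_combination hS2 + hD
  have ht12 : t₁ ≤ t₂ := by
    rw [ht₁, ht₂, div_le_div_iff₀ hden (by linarith only [hcpos] : (0:ℝ) < 2 * c)]
    have h4ac : 4 * a * c ≤ (1 - b) ^ 2 := by
      have hh := hD0
      rw [hD] at hh
      linarith only [hh]
    have hexp : (1 - b + Real.sqrt D) * (1 - b + Real.sqrt D)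
        = (1 - b) ^ 2 + 2 * ((1 - b) * Real.sqrt D) + Real.sqrt D ^ 2 := by ring
    rw [hexp, hS2]
    linarith only [mul_nonneg h1b.le hSpos.le, h4ac, hD0]
  have hCΘt₂ : CΘ ≤ t₂ := by rw [hCΘ]; exact max_le hΘ₀t₂ ht12
  have hCΘt₁ : t₁ ≤ CΘ := by rw [hCΘ]; exact le_max_right _ _
  have hkey : a + b * CΘ + c * CΘ ^ 2 ≤ CΘ := by
    have h1 : 2 * a ≤ CΘ * (1 - b + Real.sqrt D) := by
      rw [ht₁] at hCΘt₁
      exact (div_le_iff₀ hden).mp hCΘt₁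
    have h2 : 2 * c * CΘ ≤ 1 - b + Real.sqrt D := by
      rw [ht₂] at hCΘt₂
      have hh := (le_div_iff₀ (by linarith only [hcpos] : (0:ℝ) < 2 * c)).mp hCΘt₂
      linarith only [hh]
    have hP : 0 ≤ (1 - b + Real.sqrt D - 2 * c * CΘ)
        * (CΘ * (1 - b + Real.sqrt D) - 2 * a) :=
      mul_nonneg (by linarith only [h2]) (by linarith only [h1])
    have hc2 : CΘ * (1 - b + Real.sqrt D) ^ 2
        = CΘ * (2 * (1 - b) * (1 - b + Real.sqrt D) - 4 * a * c) := by rw [hden2]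
    have hG : 0 ≤ 2 * (1 - b + Real.sqrt D) * ((1 - b) * CΘ - a - c * CΘ ^ 2) := by
      nlinarith only [hP, hc2]
    by_contra hcon
    push_neg at hcon
    nlinarith only [hG, hden, hcon]
  -- the main induction
  have main : ∀ n, n ≤ N → ‖x n - xdag‖ ≤ CΘ * Real.sqrt (α n) := by
    intro n
    induction n with
    | zero =>
      intro _
      rw [hx0, ← hx0e]
      exact mul_le_mul_of_nonneg_right hΘCΘ (Real.sqrt_nonneg _)
    | succ n ih =>
      intro hn1
      have hnN : n < N := Nat.lt_of_succ_le hn1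
      have ihn := ih hnN.le
      have hηα : η * δbar ≤ α n := hstop n hnN
      set A := Fδ' (x n) with hA
      set xp := x (n + 1) with hxp
      have hxnC : x n ∈ C := hxC n
      have hxpC : xp ∈ C := hxC (n + 1)
      set e := ‖x n - xdag‖ with he
      set E := ‖xp - xdag‖ with hEdef
      have he0 : 0 ≤ e := norm_nonneg _
      have hE0 : 0 ≤ E := norm_nonneg _
      have heγ : e ≤ γ := by
        calc e ≤ CΘ * Real.sqrt (α n) := ihn
        _ ≤ CΘ * Real.sqrt (α 0) :=
          mul_le_mul_of_nonneg_left (Real.sqrt_le_sqrt (hanti (Nat.zero_le n))) hCΘ0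
        _ = Real.sqrt (α 0) * CΘ := mul_comm _ _
        _ ≤ γ := hγbound
      set u := A (xp - x n) + (Fδ (x n) - gδ) with hu
      set v := A (xdag - xp) with hv
      have huv : u + v = A (xdag - x n) + (Fδ (x n) - gδ) := by
        rw [hu, hv, show xdag - x n = (xp - x n) + (xdag - xp) from by abel, map_add]
        abel
      -- bound on the Taylor remainder plus data noise
      have hW : ‖u + v‖ ≤ L / 2 * e ^ 2 + (δg + δF) := by
        rw [huv]
        have hT := hTaylor (x n) hxnC (he ▸ heγ)
        have hrev : ‖xdag - x n‖ = e := by rw [he, norm_sub_rev]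
        rw [hrev] at hT
        have hgb : ‖Fδ xdag - gδ‖ ≤ δg + δF := by
          have hid : Fδ xdag - gδ = (g - gδ) - (F xdag - Fδ xdag) := by
            rw [← hg]; abel
          rw [hid]
          calc ‖(g - gδ) - (F xdag - Fδ xdag)‖ ≤ ‖g - gδ‖ + ‖F xdag - Fδ xdag‖ :=
            norm_sub_le _ _
          _ ≤ δg + δF := add_le_add hδg hδF
        have hsplit : A (xdag - x n) + (Fδ (x n) - gδ)
            = (Fδ xdag - gδ) - (Fδ xdag - Fδ (x n) - A (xdag - x n)) := by abel
        calc ‖A (xdag - x n) + (Fδ (x n) - gδ)‖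
            = ‖(Fδ xdag - gδ) - (Fδ xdag - Fδ (x n) - A (xdag - x n))‖ := by rw [hsplit]
        _ ≤ ‖Fδ xdag - gδ‖ + ‖Fδ xdag - Fδ (x n) - A (xdag - x n)‖ := norm_sub_le _ _
        _ ≤ (δg + δF) + L / 2 * e ^ 2 := add_le_add hgb hT
        _ = L / 2 * e ^ 2 + (δg + δF) := by ring
      -- variational inequality for the minimizer
      have hmin' : ∀ z ∈ C, ‖A (xp - x n) + (Fδ (x n) - gδ)‖ ^ 2 + α n * ‖xp - x₀‖ ^ 2
          ≤ ‖A (z - x n) + (Fδ (x n) - gδ)‖ ^ 2 + α n * ‖z - x₀‖ ^ 2 := by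
        intro z hz
        have h := isMinOn_iff.mp (hxmin n) z hz
        simpa only [add_sub_assoc, ← hxp, ← hA] using h
      have hM := min_vi hCconvex A (x n) (Fδ (x n) - gδ) x₀ (α n) (hαpos n).le hxpC
        hxdagC hmin'
      rw [← hu, ← hv] at hM
      -- decompose the inner products
      have hs : ⟪u, v⟫_ℝ = ⟪u + v, v⟫_ℝ - ‖v‖ ^ 2 := by
        conv_rhs => rw [inner_add_left, real_inner_self_eq_norm_sq]
        ring
      have hpq : ⟪xp - x₀, xdag - xp⟫_ℝ = -E ^ 2 + ⟪x₀ - xdag, xp - xdag⟫_ℝ := by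
        rw [show xp - x₀ = (xp - xdag) + (xdag - x₀) from by abel,
          show xdag - xp = -(xp - xdag) from by abel, inner_add_left, inner_neg_right,
          inner_neg_right, real_inner_self_eq_norm_sq,
          show xdag - x₀ = -(x₀ - xdag) from by abel, inner_neg_left, ← hEdef]
        ring
      have hCS1 : ⟪u + v, v⟫_ℝ ≤ ‖u + v‖ * ‖v‖ := real_inner_le_norm _ _
      -- projection variational inequality / source condition
      have hproj' : ∀ w ∈ C, ‖(ContinuousLinearMap.adjoint (F' xdag) ω + x₀) - xdag‖
          ≤ ‖(ContinuousLinearMap.adjoint (F' xdag) ω + x₀) - w‖ := by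
        intro w hw
        have h := hPproj (ContinuousLinearMap.adjoint (F' xdag) ω + x₀) w hw
        rwa [← hsource] at h
      have hVI := proj_vi_s6 hCconvex hxdagC hproj' hxpC
      have hVI2 : ⟪x₀ - xdag, xp - xdag⟫_ℝ ≤ ρ * (‖v‖ + (δF' + L * e) * E) := by
        have hsplit : (ContinuousLinearMap.adjoint (F' xdag) ω + x₀) - xdag
            = ContinuousLinearMap.adjoint (F' xdag) ω + (x₀ - xdag) := by abel
        rw [hsplit, inner_add_left, ContinuousLinearMap.adjoint_inner_left] at hVI
        have hFA : ‖F' xdag (xp - xdag)‖ ≤ ‖v‖ + (δF' + L * e) * E := by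
          have h1 : F' xdag (xp - xdag) = A (xp - xdag) + (F' xdag - A) (xp - xdag) := by
            rw [ContinuousLinearMap.sub_apply]; abel
          have h2 : ‖A (xp - xdag)‖ = ‖v‖ := by
            rw [hv, show xdag - xp = -(xp - xdag) from by abel, map_neg, norm_neg]
          have h5 : ‖Fδ' xdag - A‖ ≤ L * e := by
            rw [norm_sub_rev, hA, he]
            exact hLip (x n) hxnC (he ▸ heγ)
          have h4 : ‖F' xdag - A‖ ≤ δF' + L * e := by
            have hsp : F' xdag - A = (F' xdag - Fδ' xdag) + (Fδ' xdag - A) := by abel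
            rw [hsp]
            exact (norm_add_le _ _).trans (add_le_add hδF' h5)
          calc ‖F' xdag (xp - xdag)‖
              = ‖A (xp - xdag) + (F' xdag - A) (xp - xdag)‖ := by rw [← h1]
          _ ≤ ‖A (xp - xdag)‖ + ‖(F' xdag - A) (xp - xdag)‖ := norm_add_le _ _
          _ ≤ ‖v‖ + ‖F' xdag - A‖ * ‖xp - xdag‖ := by
            rw [h2]
            exact add_le_add le_rfl (ContinuousLinearMap.le_opNorm _ _)
          _ ≤ ‖v‖ + (δF' + L * e) * E := by
            rw [← hEdef]
            exact add_le_add le_rfl (mul_le_mul_of_nonneg_right h4 hE0)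
        have habs : -⟪ω, F' xdag (xp - xdag)⟫_ℝ ≤ ρ * (‖v‖ + (δF' + L * e) * E) := by
          calc -⟪ω, F' xdag (xp - xdag)⟫_ℝ ≤ |⟪ω, F' xdag (xp - xdag)⟫_ℝ| := neg_le_abs _
          _ ≤ ‖ω‖ * ‖F' xdag (xp - xdag)‖ := abs_real_inner_le_norm _ _
          _ ≤ ρ * (‖v‖ + (δF' + L * e) * E) := by
            apply mul_le_mul hω hFA (norm_nonneg _) hρ0
        linarith only [hVI, habs]
      -- central scalar inequality
      have hBdef : (0:ℝ) ≤ ρ * (δF' + L * e) :=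
        mul_nonneg hρ0 (add_nonneg hδF'0 (mul_nonneg hL.le he0))
      have hcentral : α n * E ^ 2 + ‖v‖ ^ 2
          ≤ (‖u + v‖ + α n * ρ) * ‖v‖ + α n * (ρ * (δF' + L * e)) * E := by
        rw [hs, hpq] at hM
        have hmm := mul_le_mul_of_nonneg_left hVI2 (hαpos n).le
        nlinarith only [hCS1, hM, hmm]
      have hq1 : α n * E ^ 2
          ≤ (‖u + v‖ + α n * ρ) ^ 2 / 4 + α n * (ρ * (δF' + L * e)) * E := by
        nlinarith only [sq_nonneg (‖v‖ - (‖u + v‖ + α n * ρ) / 2), hcentral]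
      set sα := Real.sqrt (α n) with hsα
      have hsα2 : sα ^ 2 = α n := Real.sq_sqrt (hαpos n).le
      have hsαpos : 0 < sα := hsα ▸ hsqpos n
      set K := (‖u + v‖ + α n * ρ) / (2 * sα) with hK
      have hK0 : 0 ≤ K := by
        rw [hK]
        exact div_nonneg (add_nonneg (norm_nonneg _) (mul_nonneg (hαpos n).le hρ0))
          (by linarith only [hsαpos])
      have hKsq : α n * K ^ 2 = (‖u + v‖ + α n * ρ) ^ 2 / 4 := by
        rw [hK, div_pow, mul_pow, hsα2]
        field_simp [(hαpos n).ne']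
        ring
      rw [← hKsq] at hq1
      have hq2 : E ^ 2 ≤ K ^ 2 + ρ * (δF' + L * e) * E := by
        nlinarith only [hq1, hαpos n]
      have hE_le : E ≤ ρ * (δF' + L * e) + K := by
        by_contra hcon
        push_neg at hcon
        have hEpos : 0 < E := lt_of_le_of_lt (add_nonneg hBdef hK0) hcon
        have p1 : E * (ρ * (δF' + L * e) + K) < E * E := mul_lt_mul_of_pos_left hcon hEpos
        have p2 : K * (ρ * (δF' + L * e) + K) ≤ K * E :=
          mul_le_mul_of_nonneg_left hcon.le hK0
        nlinarith only [hq2, mul_nonneg hK0 hBdef, p1, p2]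
      -- now estimate each term
      set s' := Real.sqrt (α (n + 1)) with hs'
      have hs'pos : 0 < s' := hs' ▸ hsqpos (n + 1)
      have hsαr : sα ≤ Real.sqrt r * s' := by rw [hsα, hs']; exact hsqr n
      set sηδ := Real.sqrt (η * δbar) with hsηδ
      have hsηδpos : 0 < sηδ := hsηδ ▸ Real.sqrt_pos.mpr hηδpos
      have hsηα : sηδ ≤ sα := by rw [hsηδ, hsα]; exact Real.sqrt_le_sqrt hηα
      have h32 : (1:ℝ) ≤ Real.sqrt (3 / 2) := by
        rw [show (1:ℝ) = Real.sqrt 1 from by simp]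
        exact Real.sqrt_le_sqrt (by norm_num)
      have hfacm : sα ^ 2 ≤ Real.sqrt r * (sα * s') := by
        nlinarith only [mul_le_mul_of_nonneg_left hsαr hsαpos.le]
      have f1 : ρ * δF' ≤ (Real.sqrt r * (Real.sqrt (3 / 2) * ρ * δF' / sηδ)) * s' := by
        have hfac : 1 ≤ Real.sqrt r * Real.sqrt (3 / 2) * s' / sηδ := by
          rw [le_div_iff₀ hsηδpos, one_mul]
          calc sηδ ≤ sα := hsηα
          _ ≤ Real.sqrt r * s' := hsαr
          _ ≤ Real.sqrt r * Real.sqrt (3 / 2) * s' := by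
            nlinarith only [mul_nonneg hsrpos.le hs'pos.le, h32]
        calc ρ * δF' = (ρ * δF') * 1 := by ring
        _ ≤ (ρ * δF') * (Real.sqrt r * Real.sqrt (3 / 2) * s' / sηδ) :=
          mul_le_mul_of_nonneg_left hfac (mul_nonneg hρ0 hδF'0)
        _ = (Real.sqrt r * (Real.sqrt (3 / 2) * ρ * δF' / sηδ)) * s' := by ring
      have hb' : Real.sqrt r * (ρ * L) ≤ Real.sqrt (3 * r / 2) * ρ * L := by
        have hsr32 : Real.sqrt r ≤ Real.sqrt (3 * r / 2) :=
          Real.sqrt_le_sqrt (by linarith only [hr0])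
        nlinarith only [mul_nonneg hρ0 hL.le, hsr32]
      have f2 : ρ * L * e ≤ (b * CΘ) * s' := by
        calc ρ * L * e ≤ ρ * L * (CΘ * sα) :=
          mul_le_mul_of_nonneg_left ihn (mul_nonneg hρ0 hL.le)
        _ ≤ ρ * L * (CΘ * (Real.sqrt r * s')) :=
          mul_le_mul_of_nonneg_left (mul_le_mul_of_nonneg_left hsαr hCΘ0)
            (mul_nonneg hρ0 hL.le)
        _ = (Real.sqrt r * (ρ * L)) * CΘ * s' := by ring
        _ ≤ (Real.sqrt (3 * r / 2) * ρ * L) * CΘ * s' := by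
          apply mul_le_mul_of_nonneg_right (mul_le_mul_of_nonneg_right hb' hCΘ0) hs'pos.le
        _ = (b * CΘ) * s' := by rw [hb]
      have hWb : ‖u + v‖ + α n * ρ ≤ L / 2 * (CΘ ^ 2 * α n) + (δg + δF) + α n * ρ := by
        have he2 : e ^ 2 ≤ CΘ ^ 2 * α n := by
          calc e ^ 2 ≤ (CΘ * sα) ^ 2 := pow_le_pow_left₀ he0 ihn 2
          _ = CΘ ^ 2 * α n := by rw [mul_pow, hsα2]
        nlinarith only [hW, hL.le, he2]
      have f3 : K ≤ (Real.sqrt r * ρ) * s'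
          + (Real.sqrt r * ((δg + δF) / (η * δbar))) * s' + (c * CΘ ^ 2) * s' := by
        rw [hK, div_le_iff₀ (by linarith only [hsαpos] : (0:ℝ) < 2 * sα)]
        have h1 : α n * ρ ≤ 2 * (Real.sqrt r * ρ) * (sα * s') := by
          nlinarith only [hfacm, hρ0, hsα2,
            mul_nonneg (mul_nonneg hsrpos.le hsαpos.le) hs'pos.le]
        have hfac2 : η * δbar ≤ 2 * Real.sqrt r * (sα * s') := by
          nlinarith only [hηα, hfacm, hsα2,
            mul_nonneg hsrpos.le (mul_nonneg hsαpos.le hs'pos.le)]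
        have h2 : (δg + δF) ≤ 2 * (Real.sqrt r * ((δg + δF) / (η * δbar))) * (sα * s') := by
          calc (δg + δF) = (δg + δF) / (η * δbar) * (η * δbar) :=
            (div_mul_cancel₀ _ hηδpos.ne').symm
          _ ≤ (δg + δF) / (η * δbar) * (2 * Real.sqrt r * (sα * s')) :=
            mul_le_mul_of_nonneg_left hfac2 (div_nonneg hδ0 hηδpos.le)
          _ = 2 * (Real.sqrt r * ((δg + δF) / (η * δbar))) * (sα * s') := by ring
        have h3 : L / 2 * (CΘ ^ 2 * α n) ≤ 2 * (c * CΘ ^ 2) * (sα * s') := by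
          rw [hc]
          nlinarith only [hfacm, hsα2, mul_nonneg hL.le (sq_nonneg CΘ),
            mul_nonneg (mul_nonneg hL.le (sq_nonneg CΘ)) (sq_nonneg sα)]
        calc ‖u + v‖ + α n * ρ ≤ L / 2 * (CΘ ^ 2 * α n) + (δg + δF) + α n * ρ := hWb
        _ ≤ 2 * (c * CΘ ^ 2) * (sα * s')
            + 2 * (Real.sqrt r * ((δg + δF) / (η * δbar))) * (sα * s')
            + 2 * (Real.sqrt r * ρ) * (sα * s') := by linarith only [h1, h2, h3]
        _ = ((Real.sqrt r * ρ) * s' + (Real.sqrt r * ((δg + δF) / (η * δbar))) * s'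
            + (c * CΘ ^ 2) * s') * (2 * sα) := by ring
      -- assemble
      have hBsplit : ρ * (δF' + L * e) = ρ * δF' + ρ * L * e := by ring
      have ha' : a * s' = (Real.sqrt r * (Real.sqrt (3 / 2) * ρ * δF' / sηδ)) * s'
          + (Real.sqrt r * ρ) * s' + (Real.sqrt r * ((δg + δF) / (η * δbar))) * s' := by
        rw [ha, hsηδ]; ring
      have hsum : E ≤ (a + b * CΘ + c * CΘ ^ 2) * s' := by
        have expand : (a + b * CΘ + c * CΘ ^ 2) * s'
            = a * s' + (b * CΘ) * s' + (c * CΘ ^ 2) * s' := by ring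
        linarith only [hE_le, f1, f2, f3, hBsplit, expand, ha']
      calc E ≤ (a + b * CΘ + c * CΘ ^ 2) * s' := hsum
      _ ≤ CΘ * s' := mul_le_mul_of_nonneg_right hkey hs'pos.le
  -- conclusions
  have hγn : ∀ n, n ≤ N → ‖x n - xdag‖ ≤ γ := by
    intro n hn
    calc ‖x n - xdag‖ ≤ CΘ * Real.sqrt (α n) := main n hn
    _ ≤ CΘ * Real.sqrt (α 0) :=
      mul_le_mul_of_nonneg_left (Real.sqrt_le_sqrt (hanti (Nat.zero_le n))) hCΘ0
    _ = Real.sqrt (α 0) * CΘ := mul_comm _ _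
    _ ≤ γ := hγbound
  refine ⟨fun n hn => ⟨main n hn, hγn n hn⟩, ?_⟩
  calc ‖x N - xdag‖ ≤ CΘ * Real.sqrt (α N) := main N le_rfl
  _ ≤ CΘ * Real.sqrt (η * δbar) :=
    mul_le_mul_of_nonneg_left (Real.sqrt_le_sqrt hstopN.le) hCΘ0
end

section
/- Existence and uniqueness of constrained Tikhonov minimizers: for every bounded linear operator T : X → Y, every g ∈ Y, x₀ ∈ X and α > 0, there exists a unique x* ∈ C such that ‖Tx* − g‖² + α‖x* − x₀‖² ≤ ‖Tx − g‖² + α‖x − x₀‖² for all x ∈ C. -/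
open scoped RealInnerProductSpace


/-- **Existence and uniqueness of constrained Tikhonov minimizers.** For every bounded
linear `T : X → Y`, every `g ∈ Y`, `x₀ ∈ X` and `α > 0`, there is a unique `x* ∈ C`
with `‖Tx* − g‖² + α‖x* − x₀‖² ≤ ‖Tx − g‖² + α‖x − x₀‖²` for all `x ∈ C`. -/
theorem constrained_tikhonov_existence_uniqueness
    {X Y : Type*} [NormedAddCommGroup X] [InnerProductSpace ℝ X] [CompleteSpace X]
    [NormedAddCommGroup Y] [InnerProductSpace ℝ Y] [CompleteSpace Y]
    (C : Set X) (hC : C.Nonempty) (hCclosed : IsClosed C) (hCconvex : Convex ℝ C)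
    (T : X →L[ℝ] Y) (g : Y) (x₀ : X) (α : ℝ) (hα : 0 < α) :
    ∃! xstar : X, xstar ∈ C ∧ ∀ x ∈ C,
      ‖T xstar - g‖ ^ 2 + α * ‖xstar - x₀‖ ^ 2 ≤ ‖T x - g‖ ^ 2 + α * ‖x - x₀‖ ^ 2 := by
  set s : ℝ := Real.sqrt α with hs
  have hs0 : 0 < s := Real.sqrt_pos.mpr hα
  set Φ : X →L[ℝ] WithLp 2 (Y × X) :=
    (WithLp.prodContinuousLinearEquiv 2 ℝ Y X).symm.toContinuousLinearMap.comp
      (T.prod (s • ContinuousLinearMap.id ℝ X)) with hΦ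
  set b : WithLp 2 (Y × X) := (WithLp.equiv 2 (Y × X)).symm (g, s • x₀) with hb
  -- key identity
  have key : ∀ x : X, ‖Φ x - b‖ ^ 2 = ‖T x - g‖ ^ 2 + α * ‖x - x₀‖ ^ 2 := by
    intro x
    have hfst : (Φ x - b).fst = T x - g := rfl
    have hsnd : (Φ x - b).snd = s • x - s • x₀ := rfl
    rw [WithLp.prod_norm_sq_eq_of_L2, hfst, hsnd, ← smul_sub, norm_smul,
      Real.norm_eq_abs, abs_of_pos hs0, mul_pow, hs, Real.sq_sqrt hα.le]
  -- Φ is antilipschitz, hence injective with closed image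
  have hbound : ∀ x : X, ‖x‖ ≤ (((⟨s, hs0.le⟩ : NNReal)⁻¹ : NNReal) : ℝ) * ‖Φ x‖ := by
    intro x
    have h1 : s * ‖x‖ ≤ ‖Φ x‖ := by
      have h2 : (s * ‖x‖) ^ 2 ≤ ‖Φ x‖ ^ 2 := by
        have : ‖Φ x‖ ^ 2 = ‖T x‖ ^ 2 + ‖s • x‖ ^ 2 := by
          rw [WithLp.prod_norm_sq_eq_of_L2]; rfl
        rw [this, norm_smul, Real.norm_eq_abs, abs_of_pos hs0]
        nlinarith [sq_nonneg ‖T x‖]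
      have := Real.sqrt_le_sqrt h2
      rwa [Real.sqrt_sq (by positivity), Real.sqrt_sq (norm_nonneg _)] at this
    have hco : (((⟨s, hs0.le⟩ : NNReal)⁻¹ : NNReal) : ℝ) = s⁻¹ := by
      exact NNReal.coe_inv _
    rw [hco, inv_mul_eq_div, le_div_iff₀ hs0, mul_comm]
    exact h1
  have hanti : AntilipschitzWith (⟨s, hs0.le⟩ : NNReal)⁻¹ Φ :=
    ContinuousLinearMap.antilipschitz_of_bound Φ hbound
  have hΦinj : Function.Injective Φ := hanti.injective
  clear_value s Φ b
  -- the image set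
  set K : Set (WithLp 2 (Y × X)) := Φ '' C with hK
  have hKne : K.Nonempty := hC.image _
  have hKconv : Convex ℝ K := hCconvex.linear_image (Φ : X →ₗ[ℝ] WithLp 2 (Y × X))
  have hKcomplete : IsComplete K := by
    have : IsClosed K :=
      ((hanti.isClosedEmbedding Φ.uniformContinuous).isClosedMap C hCclosed)
    exact this.isComplete
  -- minimizer property ↔ nearest point
  have hmin_iff : ∀ x1 : X, x1 ∈ C →
      ((∀ x ∈ C, ‖T x1 - g‖ ^ 2 + α * ‖x1 - x₀‖ ^ 2 ≤ ‖T x - g‖ ^ 2 + α * ‖x - x₀‖ ^ 2)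
        ↔ ∀ w ∈ K, ‖b - Φ x1‖ ≤ ‖b - w‖) := by
    intro x1 hx1
    constructor
    · rintro h w ⟨x, hx, rfl⟩
      have h2 : ‖Φ x1 - b‖ ^ 2 ≤ ‖Φ x - b‖ ^ 2 := by rw [key, key]; exact h x hx
      have := Real.sqrt_le_sqrt h2
      rwa [Real.sqrt_sq (norm_nonneg _), Real.sqrt_sq (norm_nonneg _),
        norm_sub_rev (Φ x1), norm_sub_rev (Φ x)] at this
    · intro h x hx
      have h1 : ‖b - Φ x1‖ ≤ ‖b - Φ x‖ := h _ ⟨x, hx, rfl⟩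
      have h2 : ‖Φ x1 - b‖ ^ 2 ≤ ‖Φ x - b‖ ^ 2 := by
        rw [norm_sub_rev (Φ x1), norm_sub_rev (Φ x)]
        exact pow_le_pow_left₀ (norm_nonneg _) h1 2
      rw [key, key] at h2; exact h2
  -- nearest point iff infimum characterization
  have hnear_iInf : ∀ v ∈ K, (∀ w ∈ K, ‖b - v‖ ≤ ‖b - w‖) ↔
      (‖b - v‖ = ⨅ w : K, ‖b - w‖) := by
    intro v hv
    haveI : Nonempty K := ⟨⟨v, hv⟩⟩
    constructor
    · intro h
      refine le_antisymm (le_ciInf fun w => h w w.2) ?_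
      exact ciInf_le ⟨0, Set.forall_mem_range.2 fun _ => norm_nonneg _⟩ (⟨v, hv⟩ : K)
    · intro h w hw
      rw [h]
      exact ciInf_le ⟨0, Set.forall_mem_range.2 fun _ => norm_nonneg _⟩ (⟨w, hw⟩ : K)
  -- existence
  obtain ⟨v, hvK, hvmin⟩ := exists_norm_eq_iInf_of_complete_convex hKne hKcomplete hKconv b
  obtain ⟨x1, hx1C, rfl⟩ := hvK
  refine ⟨x1, ⟨hx1C, ?_⟩, ?_⟩
  · exact (hmin_iff x1 hx1C).mpr ((hnear_iInf _ ⟨x1, hx1C, rfl⟩).mpr hvmin)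
  · -- uniqueness
    rintro x2 ⟨hx2C, hx2min⟩
    have h2 : ‖b - Φ x2‖ = ⨅ w : K, ‖b - w‖ :=
      (hnear_iInf _ ⟨x2, hx2C, rfl⟩).mp ((hmin_iff x2 hx2C).mp hx2min)
    have hc1 := (norm_eq_iInf_iff_real_inner_le_zero hKconv (⟨x1, hx1C, rfl⟩ : Φ x1 ∈ K)).mp hvmin
    have hc2 := (norm_eq_iInf_iff_real_inner_le_zero hKconv (⟨x2, hx2C, rfl⟩ : Φ x2 ∈ K)).mp h2
    have e1 := hc1 (Φ x2) ⟨x2, hx2C, rfl⟩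
    have e2 := hc2 (Φ x1) ⟨x1, hx1C, rfl⟩
    have : (inner ℝ (Φ x1 - Φ x2) (Φ x1 - Φ x2) : ℝ) ≤ 0 := by
      have hsum := add_nonpos e1 e2
      have heq : (inner ℝ (b - Φ x1) (Φ x2 - Φ x1) : ℝ) + (inner ℝ (b - Φ x2) (Φ x1 - Φ x2) : ℝ)
          = (inner ℝ (Φ x1 - Φ x2) (Φ x1 - Φ x2) : ℝ) := by
        rw [show Φ x2 - Φ x1 = -(Φ x1 - Φ x2) by abel, inner_neg_right,
          ← inner_neg_left, ← inner_add_left]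
        congr 1
        abel
      rw [heq] at hsum
      exact hsum
    have hzero : Φ x1 - Φ x2 = 0 := by
      have h0 := real_inner_self_nonneg (x := Φ x1 - Φ x2)
      have : (inner ℝ (Φ x1 - Φ x2) (Φ x1 - Φ x2) : ℝ) = 0 := le_antisymm this h0
      exact inner_self_eq_zero.mp this
    exact hΦinj (sub_eq_zero.mp hzero) |>.symm
end

section
/- Minimum-norm property on the linearized solution set: let F : C → Y, let x† ∈ C with F(x†) = g, let A : X → Y be a bounded linear operator (the derivative F'[x†]), and let x₀ ∈ X. Assume x† minimizes ‖x − x₀‖ over the set {x ∈ C : F(x) = g}, and assume that for every v₀ in the null space of A with x† + v₀ ∈ C there exist ε > 0 and a curve v : [0, ε) → C with v(0) = x†, which is differentiable at 0 from the right with v'(0) = v₀, and which satisfies F(v(t)) = g for all t ∈ [0, ε). Then x† minimizes ‖x − x₀‖ over the set {x ∈ C : A(x − x†) = 0}. -/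
open scoped RealInnerProductSpace


/-- **Minimum-norm property on the linearized solution set.** Let `F : C → Y`,
`x† ∈ C` with `F(x†) = g`, let `A : X → Y` be bounded linear (the derivative `F'[x†]`),
and `x₀ ∈ X`. If `x†` minimizes `‖x − x₀‖` over `{x ∈ C : F(x) = g}` and for every
`v₀ ∈ N(A)` with `x† + v₀ ∈ C` there are `ε > 0` and a curve `v : [0, ε) → C` with
`v(0) = x†`, `F(v(t)) = g` on `[0, ε)`, and `(v(t) − v(0))/t → v₀` as `t → 0⁺`, then
`x†` minimizes `‖x − x₀‖` over `{x ∈ C : A(x − x†) = 0}`. -/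
theorem minimum_norm_on_linearized_solution_set
    {X Y : Type*} [NormedAddCommGroup X] [InnerProductSpace ℝ X] [CompleteSpace X]
    [NormedAddCommGroup Y] [InnerProductSpace ℝ Y] [CompleteSpace Y]
    (C : Set X) (hC : C.Nonempty) (hCclosed : IsClosed C) (hCconvex : Convex ℝ C)
    (F : X → Y) (g : Y) (xdag : X) (hxdagC : xdag ∈ C) (hxdagEq : F xdag = g)
    (A : X →L[ℝ] Y) (x₀ : X)
    (hmin : IsMinOn (fun x => ‖x - x₀‖) {x ∈ C | F x = g} xdag)
    (hcurve : ∀ v₀ : X, A v₀ = 0 → xdag + v₀ ∈ C →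
      ∃ ε > (0 : ℝ), ∃ v : ℝ → X, v 0 = xdag ∧
        (∀ t ∈ Set.Ico (0 : ℝ) ε, v t ∈ C ∧ F (v t) = g) ∧
        Filter.Tendsto (fun t : ℝ => t⁻¹ • (v t - v 0))
          (nhdsWithin 0 (Set.Ioi 0)) (nhds v₀)) :
    IsMinOn (fun x => ‖x - x₀‖) {x ∈ C | A (x - xdag) = 0} xdag := by
  intro x hx
  obtain ⟨hxC, hxA⟩ := hx
  have hadd : xdag + (x - xdag) ∈ C := by simpa using hxC
  obtain ⟨ε, hε, v, hv0, hvCg, htend⟩ := hcurve (x - xdag) hxA hadd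
  -- v t → xdag as t → 0⁺
  have hvt : Filter.Tendsto v (nhdsWithin 0 (Set.Ioi 0)) (nhds xdag) := by
    have hid : Filter.Tendsto (fun t : ℝ => t) (nhdsWithin 0 (Set.Ioi 0)) (nhds 0) :=
      Filter.tendsto_id.mono_left nhdsWithin_le_nhds
    have h1 : Filter.Tendsto (fun t : ℝ => t • (t⁻¹ • (v t - v 0)))
        (nhdsWithin 0 (Set.Ioi 0)) (nhds ((0 : ℝ) • (x - xdag))) := hid.smul htend
    have h2 : Filter.Tendsto (fun t : ℝ => v t - v 0)
        (nhdsWithin 0 (Set.Ioi 0)) (nhds 0) := by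
      rw [zero_smul] at h1
      refine h1.congr' ?_
      filter_upwards [self_mem_nhdsWithin] with t ht
      rw [smul_inv_smul₀ (ne_of_gt ht)]
    have := h2.add_const (v 0)
    simpa [hv0] using this
  -- the quotient function and its limit
  set w : X := x - xdag with hw
  have hL : Filter.Tendsto (fun t : ℝ => ⟪t⁻¹ • (v t - v 0), v t + xdag - 2 • x₀⟫)
      (nhdsWithin 0 (Set.Ioi 0)) (nhds ⟪w, xdag + xdag - 2 • x₀⟫) := by
    have h3 : Filter.Tendsto (fun t : ℝ => v t + xdag - 2 • x₀)
        (nhdsWithin 0 (Set.Ioi 0)) (nhds (xdag + xdag - 2 • x₀)) :=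
      ((hvt.add_const xdag).sub_const (2 • x₀))
    exact (Filter.Tendsto.inner htend h3)
  -- nonnegativity eventually
  have hnonneg : ∀ᶠ t in nhdsWithin 0 (Set.Ioi 0),
      0 ≤ ⟪t⁻¹ • (v t - v 0), v t + xdag - 2 • x₀⟫ := by
    have hmem : Set.Ioo (0:ℝ) ε ∈ nhdsWithin 0 (Set.Ioi 0) :=
      Ioo_mem_nhdsGT_of_mem ⟨le_refl 0, hε⟩
    filter_upwards [hmem] with t ht
    obtain ⟨htpos, htlt⟩ := ht
    obtain ⟨hvC, hvg⟩ := hvCg t ⟨le_of_lt htpos, htlt⟩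
    have hle : ‖xdag - x₀‖ ≤ ‖v t - x₀‖ := hmin ⟨hvC, hvg⟩
    have hinner : ⟪v t - v 0, v t + xdag - 2 • x₀⟫
        = ‖v t - x₀‖ ^ 2 - ‖xdag - x₀‖ ^ 2 := by
      have ha : v t - v 0 = (v t - x₀) - (xdag - x₀) := by rw [hv0]; abel
      have hb : v t + xdag - 2 • x₀ = (v t - x₀) + (xdag - x₀) := by
        rw [two_smul]; abel
      rw [ha, hb, inner_sub_left, inner_add_right, inner_add_right,
        real_inner_self_eq_norm_sq, real_inner_self_eq_norm_sq,
        real_inner_comm (xdag - x₀) (v t - x₀)]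
      ring
    rw [real_inner_smul_left, hinner]
    have : (0:ℝ) ≤ ‖v t - x₀‖ ^ 2 - ‖xdag - x₀‖ ^ 2 := by
      nlinarith [norm_nonneg (v t - x₀), norm_nonneg (xdag - x₀)]
    exact mul_nonneg (inv_nonneg.mpr htpos.le) this
  -- limit is nonneg
  have hkey : 0 ≤ ⟪w, xdag + xdag - 2 • x₀⟫ := ge_of_tendsto hL hnonneg
  have hkey' : 0 ≤ ⟪x - xdag, xdag - x₀⟫ := by
    have heq : xdag + xdag - 2 • x₀ = (xdag - x₀) + (xdag - x₀) := by
      rw [two_smul]; abel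
    rw [heq, inner_add_right] at hkey
    have hwx : w = x - xdag := hw
    rw [hwx] at hkey
    linarith
  -- conclude
  have hsq : ‖xdag - x₀‖ ^ 2 ≤ ‖x - x₀‖ ^ 2 := by
    have hxx : x - x₀ = (x - xdag) + (xdag - x₀) := by abel
    rw [hxx, norm_add_sq_real]
    nlinarith [norm_nonneg (x - xdag)]
  simp only
  have := Real.sqrt_le_sqrt hsq
  rwa [Real.sqrt_sq (norm_nonneg _), Real.sqrt_sq (norm_nonneg _)] at this
end
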